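/- arXiv:2411.03813 — 4 statements merged into one kernel-verified Lean document; each statement's English description precedes it below -/
import Mathlib

section
/- Let C̃ be a finite set of m̃ pairwise distinct clauses over n ≥ 3 variables such that some truth assignment σ ∈ {0,1}^n makes at least one literal true in every clause of C̃. Then κ(C̃) ≥ 82·m̃⁴/(64·n⁶) − 123·m̃³/(16·n⁴). -/
open scoped Classical

/-- A literal over `n` Boolean variables: a (variable, sign) pair. -/
abbrev Lit (n : ℕ) := Fin n × Bool

/-- A clause: a set of three literals whose three variables are pairwise distinct. -/
abbrev Clause (n : ℕ) :=
  {s : Finset (Lit n) // s.card = 3 ∧ (s.image Prod.fst).card = 3}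

/-- A 3-SAT instance: a sequence of `m` clauses over `n` variables. -/
abbrev SatInstance (n m : ℕ) := Fin m → Clause n

/-- The assignment `σ` makes at least one literal of clause `c` true. -/
def Satisfies {n : ℕ} (σ : Fin n → Bool) (c : Clause n) : Prop :=
  ∃ ℓ ∈ c.1, σ ℓ.1 = ℓ.2

/-- The instance `C` is satisfiable. -/
def SAT {n m : ℕ} (C : SatInstance n m) : Prop :=
  ∃ σ : Fin n → Bool, ∀ i, Satisfies σ (C i)

/-- Probability of the event `P` under the distribution (weight function) `D`. -/
noncomputable def pr {α : Type*} [Fintype α] (D : α → ℝ) (P : α → Prop) : ℝ :=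
  ∑ a ∈ Finset.univ.filter P, D a

/-- `D` is a probability distribution on the finite type `α`. -/
def IsDistribution {α : Type*} [Fintype α] (D : α → ℝ) : Prop :=
  (∀ a, 0 ≤ D a) ∧ ∑ a, D a = 1

/-- The clauses of a random instance drawn from `D` are `k`-wise independent with
uniform marginals: any `k` clauses at distinct positions are jointly uniform,
each over the `M = 8 * (n choose 3)` possible clauses.
`IsDistribution D ∧ KWiseUniform n m k D` says `D ∈ 𝔇_k(n,m)`. -/
def KWiseUniform (n m k : ℕ) (D : SatInstance n m → ℝ) : Prop :=
  ∀ idx : Fin k → Fin m, Function.Injective idx →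
    ∀ t : Fin k → Clause n,
      pr D (fun C => ∀ j, C (idx j) = t j) = (1 / (8 * (n.choose 3 : ℝ))) ^ k

/-- `ξ(C)`: the number of unordered pairs `{i, j}` with `i ≠ j` and `c_i = c_j`. -/
noncomputable def xi {n m : ℕ} (C : SatInstance n m) : ℕ :=
  (Finset.univ.filter fun p : Fin m × Fin m => p.1 < p.2 ∧ C p.1 = C p.2).card

/-- An edge index of the bipartite multigraph `G(C)`: a clause position together with the
literal serving as the right endpoint (the left endpoint is the remaining literal pair). -/
abbrev EdgeIdx (n m : ℕ) := Fin m × Lit n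

/-- `e` is an actual edge of the multigraph `G(C)`. -/
def isEdge {n m : ℕ} (C : SatInstance n m) (e : EdgeIdx n m) : Prop :=
  e.2 ∈ (C e.1).1

/-- The left endpoint (pair of literals) of the edge `e` of `G(C)`. -/
def leftV {n m : ℕ} (C : SatInstance n m) (e : EdgeIdx n m) : Finset (Lit n) :=
  (C e.1).1.erase e.2

/-- `s` is a `K_{2,2}`-edge-set of the multigraph `G(C)`: four edges of the form
`u–v, u–v', u'–v, u'–v'` with `u ≠ u'` and `v ≠ v'`. -/
def IsK22 {n m : ℕ} (C : SatInstance n m) (s : Finset (EdgeIdx n m)) : Prop :=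
  s.card = 4 ∧ (∀ e ∈ s, isEdge C e) ∧
  ∃ u u' : Finset (Lit n), ∃ v v' : Lit n, u ≠ u' ∧ v ≠ v' ∧
    s.image (fun e => (leftV C e, e.2)) = {(u, v), (u, v'), (u', v), (u', v')}

/-- `κ(C)`: the number of `K_{2,2}`-edge-sets of the multigraph `G(C)`. -/
noncomputable def kappa {n m : ℕ} (C : SatInstance n m) : ℕ :=
  (Finset.univ.filter fun s : Finset (EdgeIdx n m) => IsK22 C s).card

/-- Adjacency in the simple bipartite graph `G(C̃)` of a set `T` of distinct clauses:
the literal pair `u` is adjacent to the literal `v`. -/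
def adjSet {n : ℕ} (T : Finset (Clause n)) (u : Finset (Lit n)) (v : Lit n) : Prop :=
  v ∉ u ∧ ∃ c ∈ T, c.1 = insert v u

/-- `κ(C̃)` for a set `T` of pairwise distinct clauses: the number of `K_{2,2}` subgraphs of
the simple bipartite graph `G(C̃)`, computed as `Σ_{{v,v'}} binom(|B_{v,v'}|, 2)`. -/
noncomputable def kappaSet {n : ℕ} (T : Finset (Clause n)) : ℕ :=
  ∑ p ∈ (Finset.univ : Finset (Lit n)).powersetCard 2,
    ((Finset.univ.filter fun u : Finset (Lit n) => ∀ v ∈ p, adjSet T u v).card).choose 2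

/-- `m̃(C)`: the number of pairwise distinct clauses occurring in `C`. -/
noncomputable def distinctCount {n m : ℕ} (C : SatInstance n m) : ℕ :=
  (Finset.univ.image C).card

/-- The set of the three variables of a clause. -/
def clVars {n : ℕ} (c : Clause n) : Finset (Fin n) := c.1.image Prod.fst

/-- `f` lists (the indices of) hyperedges of the variable hypergraph of `C` forming a
Berge path: consecutive hyperedges share exactly one vertex, non-consecutive ones
are disjoint. -/
def IsBergePathOrder {n m : ℕ} (C : SatInstance n m) {k : ℕ} (f : Fin k → Fin m) : Prop :=
  Function.Injective f ∧
  (∀ i j : Fin k, (j : ℕ) = (i : ℕ) + 1 →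
    (clVars (C (f i)) ∩ clVars (C (f j))).card = 1) ∧
  (∀ i j : Fin k, i ≠ j → (j : ℕ) ≠ (i : ℕ) + 1 → (i : ℕ) ≠ (j : ℕ) + 1 →
    Disjoint (clVars (C (f i))) (clVars (C (f j))))

/-- `j` follows `i` cyclically in `Fin ℓ`. -/
def CycConsec (ℓ : ℕ) (i j : Fin ℓ) : Prop := (j : ℕ) = ((i : ℕ) + 1) % ℓ

/-- `f` lists (the indices of) hyperedges of the variable hypergraph of `C` forming a
Berge cycle (of length `ℓ ≥ 3`): cyclically consecutive hyperedges share exactly one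
vertex, non-consecutive ones are disjoint. -/
def IsBergeCycleOrder {n m : ℕ} (C : SatInstance n m) {ℓ : ℕ} (f : Fin ℓ → Fin m) : Prop :=
  Function.Injective f ∧
  (∀ i j : Fin ℓ, CycConsec ℓ i j →
    (clVars (C (f i)) ∩ clVars (C (f j))).card = 1) ∧
  (∀ i j : Fin ℓ, i ≠ j → ¬ CycConsec ℓ i j → ¬ CycConsec ℓ j i →
    Disjoint (clVars (C (f i))) (clVars (C (f j))))

/-- The number of `k`-element sets of hyperedge indices of the variable hypergraph of `C`
that form a Berge path of length `k`. -/
noncomputable def bergePathSetCount (n m k : ℕ) (C : SatInstance n m) : ℕ :=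
  (Finset.univ.filter fun s : Finset (Fin m) =>
    s.card = k ∧ ∃ f : Fin k → Fin m, (∀ i, f i ∈ s) ∧ IsBergePathOrder C f).card

/-- The number of `ℓ`-element sets of hyperedge indices of the variable hypergraph of `C`
that form a Berge cycle of length `ℓ`. -/
noncomputable def bergeCycleSetCount (n m ℓ : ℕ) (C : SatInstance n m) : ℕ :=
  (Finset.univ.filter fun s : Finset (Fin m) =>
    s.card = ℓ ∧ ∃ f : Fin ℓ → Fin m, (∀ i, f i ∈ s) ∧ IsBergeCycleOrder C f).card


namespace Stmt12Aux

open Finset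

variable {n : ℕ}

/-- The number of common neighbours (in `G(T)`) of the pair of literals `p`. -/
noncomputable def bpair (T : Finset (Clause n)) (p : Finset (Lit n)) : ℕ :=
  (Finset.univ.filter fun u : Finset (Lit n) => ∀ v ∈ p, adjSet T u v).card

/-- Double counting pairs of common neighbours within a class `V` of literals. -/
lemma pair_swap (T : Finset (Clause n)) (V : Finset (Lit n)) :
    ∑ p ∈ V.powersetCard 2, bpair T p
      = ∑ u : Finset (Lit n), ((V.filter fun v => adjSet T u v).card).choose 2 := by
  unfold bpair
  simp_rw [Finset.card_filter]
  rw [Finset.sum_comm]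
  refine Finset.sum_congr rfl fun u _ => ?_
  rw [← Finset.card_filter]
  have h : (V.powersetCard 2).filter (fun p => ∀ v ∈ p, adjSet T u v)
      = (V.filter fun v => adjSet T u v).powersetCard 2 := by
    ext p
    simp only [Finset.mem_filter, Finset.mem_powersetCard]
    constructor
    · rintro ⟨⟨hsub, hcard⟩, hall⟩
      exact ⟨fun w hw => Finset.mem_filter.2 ⟨hsub hw, hall _ hw⟩, hcard⟩
    · rintro ⟨hsub, hcard⟩
      exact ⟨⟨fun w hw => (Finset.mem_filter.1 (hsub hw)).1, hcard⟩,
        fun w hw => (Finset.mem_filter.1 (hsub hw)).2⟩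
  rw [h, Finset.card_powersetCard, Finset.card_filter]

/-- Double counting for mixed pairs. -/
lemma rest_swap (T : Finset (Clause n)) (σ : Fin n → Bool)
    (TL FL : Finset (Lit n)) (hTL : TL = Finset.univ.filter fun v => σ v.1 = v.2)
    (hFL : FL = Finset.univ.filter fun v => ¬ σ v.1 = v.2) :
    ∑ p ∈ (Finset.univ.powersetCard 2 \ (TL.powersetCard 2 ∪ FL.powersetCard 2)),
        bpair T p
      = ∑ u : Finset (Lit n),
          ((TL.filter fun v => adjSet T u v).card) * ((FL.filter fun v => adjSet T u v).card) := by
  unfold bpair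
  simp_rw [Finset.card_filter]
  rw [Finset.sum_comm]
  refine Finset.sum_congr rfl fun u _ => ?_
  rw [← Finset.card_filter]
  have himg : ((Finset.univ.powersetCard 2 \ (TL.powersetCard 2 ∪ FL.powersetCard 2)).filter
        fun p => ∀ v ∈ p, adjSet T u v)
      = ((TL.filter fun v => adjSet T u v) ×ˢ (FL.filter fun v => adjSet T u v)).image
          (fun q => ({q.1, q.2} : Finset (Lit n))) := by
    ext p
    simp only [Finset.mem_filter, Finset.mem_sdiff, Finset.mem_union, Finset.mem_image,
      Finset.mem_powersetCard_univ, Finset.mem_powersetCard, Finset.mem_product]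
    constructor
    · rintro ⟨⟨⟨-, hcard⟩, hnot⟩, hall⟩
      obtain ⟨a, b, hab, rfl⟩ := Finset.card_eq_two.1 hcard
      have hta : ¬ ({a, b} : Finset (Lit n)) ⊆ TL := fun hsub => hnot (Or.inl ⟨hsub, hcard⟩)
      have htb : ¬ ({a, b} : Finset (Lit n)) ⊆ FL := fun hsub => hnot (Or.inr ⟨hsub, hcard⟩)
      have hmemTL : ∀ v : Lit n, v ∈ TL ∨ v ∈ FL := by
        intro v
        by_cases hv : σ v.1 = v.2
        · exact Or.inl (by rw [hTL]; exact Finset.mem_filter.2 ⟨Finset.mem_univ _, hv⟩)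
        · exact Or.inr (by rw [hFL]; exact Finset.mem_filter.2 ⟨Finset.mem_univ _, hv⟩)
      have hdisj : ∀ v : Lit n, v ∈ TL → v ∈ FL → False := by
        intro v h1 h2
        rw [hTL] at h1; rw [hFL] at h2
        exact (Finset.mem_filter.1 h2).2 (Finset.mem_filter.1 h1).2
      have ha : a ∈ ({a, b} : Finset (Lit n)) := by simp
      have hb : b ∈ ({a, b} : Finset (Lit n)) := by simp
      rcases hmemTL a with haT | haF
      · -- a ∈ TL, then b must be in FL
        have hbF : b ∈ FL := by
          rcases hmemTL b with hbT | hbF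
          · exact absurd (fun v hv => by
              rcases Finset.mem_insert.1 hv with rfl | hv
              · exact haT
              · rw [Finset.mem_singleton.1 hv]; exact hbT) hta
          · exact hbF
        exact ⟨(a, b), ⟨⟨haT, hall _ ha⟩, ⟨hbF, hall _ hb⟩⟩, rfl⟩
      · -- a ∈ FL, then b ∈ TL
        have hbT : b ∈ TL := by
          rcases hmemTL b with hbT | hbF
          · exact hbT
          · exact absurd (fun v hv => by
              rcases Finset.mem_insert.1 hv with rfl | hv
              · exact haF
              · rw [Finset.mem_singleton.1 hv]; exact hbF) htb
        refine ⟨(b, a), ⟨⟨hbT, hall _ hb⟩, ⟨haF, hall _ ha⟩⟩, ?_⟩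
        exact Finset.pair_comm b a
    · rintro ⟨⟨a, b⟩, ⟨haX, hbY⟩, rfl⟩
      have haT : a ∈ TL := haX.1
      have hbF : b ∈ FL := hbY.1
      have hadja : adjSet T u a := haX.2
      have hadjb : adjSet T u b := hbY.2
      have hab : a ≠ b := by
        rintro rfl
        rw [hTL] at haT; rw [hFL] at hbF
        exact (Finset.mem_filter.1 hbF).2 (Finset.mem_filter.1 haT).2
      have hcard : ({a, b} : Finset (Lit n)).card = 2 := Finset.card_pair hab
      refine ⟨⟨⟨Finset.subset_univ _, hcard⟩, ?_⟩, ?_⟩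
      · rintro (⟨hsub, -⟩ | ⟨hsub, -⟩)
        · have : b ∈ TL := hsub (by simp)
          rw [hTL] at this; rw [hFL] at hbF
          exact (Finset.mem_filter.1 hbF).2 (Finset.mem_filter.1 this).2
        · have : a ∈ FL := hsub (by simp)
          rw [hTL] at haT; rw [hFL] at this
          exact (Finset.mem_filter.1 this).2 (Finset.mem_filter.1 haT).2
      · intro v hv
        rcases Finset.mem_insert.1 hv with rfl | hv
        · exact hadja
        · rw [Finset.mem_singleton.1 hv]; exact hadjb
  rw [himg, Finset.card_image_of_injOn, Finset.card_product, Finset.card_filter,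
    Finset.card_filter]
  rintro ⟨a, b⟩ hab ⟨a', b'⟩ hab' heq
  simp only [Finset.mem_coe, Finset.mem_product, Finset.mem_filter] at hab hab'
  have heq' : ({a, b} : Finset (Lit n)) = {a', b'} := heq
  have haT : a ∈ TL := hab.1.1
  have hbF : b ∈ FL := hab.2.1
  have haT' : a' ∈ TL := hab'.1.1
  have hbF' : b' ∈ FL := hab'.2.1
  have hd : ∀ v : Lit n, v ∈ TL → v ∈ FL → False := by
    intro v h1 h2
    rw [hTL] at h1; rw [hFL] at h2
    exact (Finset.mem_filter.1 h2).2 (Finset.mem_filter.1 h1).2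
  have ha : a = a' := by
    have : a ∈ ({a', b'} : Finset (Lit n)) := by rw [← heq']; simp
    rcases Finset.mem_insert.1 this with h | h
    · exact h
    · rw [Finset.mem_singleton.1 h] at haT; exact absurd hbF' (fun hh => hd _ haT hh)
  have hb : b = b' := by
    have : b ∈ ({a', b'} : Finset (Lit n)) := by rw [← heq']; simp
    rcases Finset.mem_insert.1 this with h | h
    · rw [h] at hbF; exact absurd hbF (fun hh => hd _ haT' hh)
    · exact Finset.mem_singleton.1 h
  simp [ha, hb]

/-- For a fixed right vertex `v`, its neighbourhood is the image of clauses containing it. -/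
lemma nbr_eq (T : Finset (Clause n)) (v : Lit n) :
    (Finset.univ.filter fun u : Finset (Lit n) => adjSet T u v)
      = (T.filter fun c => v ∈ c.1).image (fun c => c.1.erase v) := by
  ext u
  simp only [Finset.mem_filter, Finset.mem_univ, true_and, Finset.mem_image]
  constructor
  · rintro ⟨hvu, c, hcT, hc⟩
    refine ⟨c, ⟨hcT, ?_⟩, ?_⟩
    · rw [hc]; exact Finset.mem_insert_self _ _
    · rw [hc, Finset.erase_insert hvu]
  · rintro ⟨c, ⟨hcT, hvc⟩, rfl⟩
    exact ⟨Finset.notMem_erase _ _, c, hcT, (Finset.insert_erase hvc).symm⟩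

/-- Total number of edges of `G(T)` is `3|T|`. -/
lemma edge_count (T : Finset (Clause n)) :
    ∑ u : Finset (Lit n), (Finset.univ.filter fun v : Lit n => adjSet T u v).card
      = 3 * T.card := by
  simp_rw [Finset.card_filter]
  rw [Finset.sum_comm]
  have hv : ∀ v : Lit n, (∑ u : Finset (Lit n), if adjSet T u v then 1 else 0)
      = (T.filter fun c => v ∈ c.1).card := by
    intro v
    rw [← Finset.card_filter, nbr_eq T v, Finset.card_image_of_injOn]
    intro c hc c' hc' h
    simp only [Finset.mem_coe, Finset.mem_filter] at hc hc'
    have h2 : (c.1).erase v = (c'.1).erase v := h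
    have : c.1 = c'.1 := by
      rw [← Finset.insert_erase hc.2, ← Finset.insert_erase hc'.2, h2]
    exact Subtype.ext this
  rw [Finset.sum_congr rfl fun v _ => hv v]
  simp_rw [Finset.card_filter]
  rw [Finset.sum_comm]
  have hc : ∀ c : Clause n, c ∈ T → (∑ v : Lit n, if v ∈ c.1 then 1 else 0) = 3 := by
    intro c _
    rw [← Finset.card_filter]
    rw [Finset.filter_mem_eq_inter, Finset.univ_inter]
    exact c.2.1
  rw [Finset.sum_congr rfl hc, Finset.sum_const, smul_eq_mul, mul_comm]

/-- If `u` is adjacent to anything, `u` is a pair. -/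
lemma adj_card_two (T : Finset (Clause n)) (u : Finset (Lit n)) (v : Lit n)
    (h : adjSet T u v) : u.card = 2 := by
  obtain ⟨hvu, c, hcT, hc⟩ := h
  have h3 : c.1.card = 3 := c.2.1
  rw [hc, Finset.card_insert_of_notMem hvu] at h3
  omega

/-- If a false literal is adjacent to `u`, then `u` contains a true literal. -/
lemma adj_false_true (T : Finset (Clause n)) (σ : Fin n → Bool)
    (hsat : ∀ c ∈ T, Satisfies σ c) (u : Finset (Lit n)) (v : Lit n)
    (h : adjSet T u v) (hv : ¬ σ v.1 = v.2) : ∃ w ∈ u, σ w.1 = w.2 := by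
  obtain ⟨hvu, c, hcT, hc⟩ := h
  obtain ⟨ℓ, hℓc, hℓ⟩ := hsat c hcT
  rw [hc] at hℓc
  rcases Finset.mem_insert.1 hℓc with rfl | hℓu
  · exact absurd hℓ hv
  · exact ⟨ℓ, hℓu, hℓ⟩

/-- Cauchy–Schwarz over a support of bounded size. -/
lemma cs_support {α : Type*} [Fintype α] (S : Finset α) (g : α → ℕ)
    (hs : ∀ u, u ∉ S → g u = 0) (R : ℝ) (hcard : (S.card : ℝ) ≤ R) :
    (∑ u : α, (g u : ℝ))^2 ≤ R * ∑ u : α, (g u : ℝ)^2 := by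
  have hres : ∑ u ∈ S, (g u : ℝ) = ∑ u : α, (g u : ℝ) := by
    apply Finset.sum_subset (Finset.subset_univ S)
    intro u _ hu
    rw [hs u hu]; norm_num
  have hcs : (∑ u ∈ S, (g u : ℝ))^2 ≤ (S.card : ℝ) * ∑ u ∈ S, (g u : ℝ)^2 :=
    sq_sum_le_card_mul_sum_sq
  have hle : ∑ u ∈ S, (g u : ℝ)^2 ≤ ∑ u : α, (g u : ℝ)^2 := by
    apply Finset.sum_le_sum_of_subset_of_nonneg (Finset.subset_univ S)
    intro u _ _; positivity
  have h0 : (0:ℝ) ≤ ∑ u ∈ S, (g u : ℝ)^2 := by positivity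
  calc (∑ u : α, (g u : ℝ))^2 = (∑ u ∈ S, (g u : ℝ))^2 := by rw [hres]
    _ ≤ (S.card : ℝ) * ∑ u ∈ S, (g u : ℝ)^2 := hcs
    _ ≤ R * ∑ u : α, (g u : ℝ)^2 := by
        apply mul_le_mul hcard hle h0 (le_trans (Nat.cast_nonneg _) hcard)

/-- Convexity/Cauchy–Schwarz bound for a class of pairs. -/
lemma class_bound {β : Type*} (cls : Finset β) (b : β → ℕ) (R : ℝ) (hR : 0 < R)
    (hcard : (cls.card : ℝ) ≤ R) :
    (∑ p ∈ cls, (b p : ℝ))^2/(2*R) - (∑ p ∈ cls, (b p : ℝ))/2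
      ≤ ∑ p ∈ cls, ((b p).choose 2 : ℝ) := by
  have hcs : (∑ p ∈ cls, (b p : ℝ))^2 ≤ (cls.card : ℝ) * ∑ p ∈ cls, (b p : ℝ)^2 :=
    sq_sum_le_card_mul_sum_sq
  have h2 : ∑ p ∈ cls, ((b p).choose 2 : ℝ)
      = (∑ p ∈ cls, (b p : ℝ)^2)/2 - (∑ p ∈ cls, (b p : ℝ))/2 := by
    rw [Finset.sum_div, Finset.sum_div, ← Finset.sum_sub_distrib]
    apply Finset.sum_congr rfl
    intro p _
    rw [Nat.cast_choose_two]
    ring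
  rw [h2]
  have hq : (0:ℝ) ≤ ∑ p ∈ cls, (b p : ℝ)^2 := by positivity
  have : (∑ p ∈ cls, (b p : ℝ))^2 ≤ R * ∑ p ∈ cls, (b p : ℝ)^2 :=
    le_trans hcs (mul_le_mul_of_nonneg_right hcard hq)
  have h3 : (∑ p ∈ cls, (b p : ℝ))^2/(2*R) ≤ (∑ p ∈ cls, (b p : ℝ)^2)/2 := by
    rw [div_le_div_iff₀ (by positivity) (by norm_num)]
    nlinarith
  linarith

lemma core_ineq (P m w B : ℝ) (hB : 0 ≤ B) (hw : 0 ≤ w)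
    (h1 : 18*m^2 - 21*m*P ≤ 14*P*w)
    (h2 : 9*m^2 - 6*m*P ≤ 4*P*(w+B))
    (hm : 6*P ≤ m) (hP : 9 ≤ P) :
    82*m^4 - 492*P*m^3 ≤ 32*P^2*(w^2+B^2) - 32*P^3*(w+B) := by
  have hP0 : (0:ℝ) < P := by linarith
  have hm0 : (0:ℝ) < m := by linarith
  have hu1 : (0:ℝ) ≤ 14*P*w - (18*m^2 - 21*m*P) := by linarith
  have hu2 : (0:ℝ) ≤ 4*P*(w+B) - (9*m^2 - 6*m*P) := by linarith
  nlinarith [sq_nonneg (4*(14*P*w - (18*m^2 - 21*m*P)) - 7*(4*P*(w+B) - (9*m^2 - 6*m*P))),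
    mul_nonneg hu1 (show (0:ℝ) ≤ 72*m^2 - 336*m*P by nlinarith),
    mul_nonneg hu2 (show (0:ℝ) ≤ 27*m^2 - 14*P^2 by nlinarith),
    sq_nonneg (4*P*(w+B) - (9*m^2 - 6*m*P)),
    mul_pos hm0 (pow_pos hP0 3), pow_pos hm0 4, mul_pos (mul_pos hm0 (mul_pos hm0 hm0)) hP0]

lemma final_ineq (P m x y A B C Qa Qf Qd : ℝ)
    (hx : 0 ≤ x) (hy : 0 ≤ y) (hxy : x + y = 3*m) (hB : 0 ≤ B) (hA0 : 0 ≤ A) (hC0 : 0 ≤ C)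
    (hQa : x^2 ≤ 2*P*Qa) (hQf : y^2 ≤ (3/2)*P*Qf) (hQd : (3*m)^2 ≤ 2*P*Qd)
    (hA : Qa = 2*A + x) (hC : Qf = 2*C + y) (hS : Qd = 2*(A+B+C) + 3*m)
    (hm : 6*P ≤ m) (hP : 9 ≤ P) :
    82*m^4/(64*P^3) - 123*m^3/(16*P^2) ≤ A^2/P + C^2/P + B^2/(2*P) - (A+B+C)/2 := by
  have hP0 : (0:ℝ) < P := by linarith
  -- h1 : from Qa, Qf bounds and x^2/2 + 2y^2/3 ≥ 18m^2/7
  have key : 18*m^2/7 ≤ x^2/2 + 2*y^2/3 := by nlinarith [sq_nonneg (x - 12*m/7)]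
  rw [hA] at hQa
  rw [hC] at hQf
  rw [hS] at hQd
  have hxyP : P*(x+y) = P*(3*m) := by rw [hxy]
  have h1 : 18*m^2 - 21*m*(P) ≤ 14*P*(A+C) := by linarith
  have h2 : 9*m^2 - 6*m*P ≤ 4*P*((A+C)+B) := by linarith
  have hcore := core_ineq P m (A+C) B hB (by linarith) h1 h2 hm hP
  have hAC : (A+C)^2/2 ≤ A^2 + C^2 := by nlinarith [sq_nonneg (A - C)]
  have e1 : 82*m^4/(64*P^3) - 123*m^3/(16*P^2)
      = (82*m^4 - 492*P*m^3) / (64*P^3) := by field_simp; ring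
  have e2 : A^2/P + C^2/P + B^2/(2*P) - (A+B+C)/2
      = (64*P^2*(A^2+C^2) + 32*P^2*B^2 - 32*P^3*(A+B+C)) / (64*P^3) := by
    field_simp; ring
  rw [e1, e2, div_le_div_iff_of_pos_right (by positivity)]
  nlinarith [hcore, hAC, sq_nonneg P]

lemma true_lits_card (σ : Fin n → Bool) :
    (Finset.univ.filter fun v : Lit n => σ v.1 = v.2).card = n := by
  have h : (Finset.univ.filter fun v : Lit n => σ v.1 = v.2)
      = Finset.univ.image (fun i : Fin n => ((i, σ i) : Lit n)) := by
    ext ⟨i, c⟩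
    simp only [Finset.mem_filter, Finset.mem_univ, true_and, Finset.mem_image]
    constructor
    · rintro h
      exact ⟨i, by rw [h]⟩
    · rintro ⟨j, hj⟩
      obtain ⟨rfl, rfl⟩ := Prod.mk.injEq .. ▸ hj
      simp
  rw [h, Finset.card_image_of_injective _ (fun i j hij => (Prod.mk.injEq .. ▸ hij).1),
    Finset.card_univ, Fintype.card_fin]

lemma false_lits_card (σ : Fin n → Bool) :
    (Finset.univ.filter fun v : Lit n => ¬ σ v.1 = v.2).card = n := by
  have htot := Finset.card_filter_add_card_filter_not
    (s := (Finset.univ : Finset (Lit n))) (p := fun v => σ v.1 = v.2)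
  have hcard : (Finset.univ : Finset (Lit n)).card = 2 * n := by
    rw [Finset.card_univ]
    simp [Fintype.card_prod, Fintype.card_fin, Fintype.card_bool]
    ring
  have := true_lits_card σ
  omega

lemma aux1 (r : ℝ) (hr : 3 ≤ r) : r*(2*r-1) ≤ 2*r^2 := by nlinarith
lemma aux2 (r : ℝ) (hr : 3 ≤ r) : r*(2*r-1) - r*(r-1)/2 ≤ (3/2)*r^2 := by nlinarith
lemma aux3 (r : ℝ) (hr : 3 ≤ r) : r*(r-1)/2 ≤ r^2/2 := by nlinarith
lemma aux4 (r : ℝ) (hr : 3 ≤ r) : 9 ≤ r^2 := by nlinarith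
lemma aux5 (a b : ℝ) (ha : 0 ≤ a) (hb : 3 ≤ b) (hab : a ≤ 6*b^2) :
    82*a^4/(64*b^6) - 123*a^3/(16*b^4) ≤ 0 := by
  have h : 82 * a^4 / (64*b^6) ≤ 123 * a^3/(16*b^4) := by
    rw [div_le_div_iff₀ (by positivity) (by positivity)]
    nlinarith [mul_nonneg (mul_nonneg (pow_nonneg ha 3)
      (pow_nonneg (by linarith : (0:ℝ) ≤ b) 4)) (sub_nonneg.2 hab)]
  linarith
lemma auxRst (r rst : ℝ) (hr : 3 ≤ r)
    (h5 : rst + (r*(r-1)/2 + r*(r-1)/2) = r*(2*r-1)) : rst ≤ r^2 := by nlinarith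

end Stmt12Aux

set_option maxHeartbeats 2000000 in
/-- For a satisfiable set `T` of `m̃` pairwise distinct clauses over `n ≥ 3` variables,
`κ(T) ≥ 82·m̃⁴/(64·n⁶) − 123·m̃³/(16·n⁴)`. -/
theorem stmt12 (n : ℕ) (hn : 3 ≤ n) (T : Finset (Clause n))
    (hsat : ∃ σ : Fin n → Bool, ∀ c ∈ T, Satisfies σ c) :
    82 * (T.card : ℝ) ^ 4 / (64 * (n : ℝ) ^ 6) - 123 * (T.card : ℝ) ^ 3 / (16 * (n : ℝ) ^ 4)
      ≤ (kappaSet T : ℝ) := by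
  classical
  obtain ⟨σ, hσ⟩ := hsat
  have hm0 : (0:ℝ) ≤ (T.card : ℝ) := Nat.cast_nonneg _
  have hn3 : (3:ℝ) ≤ (n:ℝ) := by exact_mod_cast hn
  have hn0 : (0:ℝ) < (n:ℝ) := by linarith
  by_cases hcase : (T.card : ℝ) ≤ 6*(n:ℝ)^2
  · -- small case: the right-hand side is nonpositive
    exact le_trans (Stmt12Aux.aux5 _ _ hm0 hn3 hcase) (Nat.cast_nonneg _)
  push_neg at hcase
  -- main case
  set m : ℝ := (T.card : ℝ) with hmdef
  set P : ℝ := (n:ℝ)^2 with hPdef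
  have hP0 : (0:ℝ) < P := by positivity
  have hP9 : (9:ℝ) ≤ P := by rw [hPdef]; exact Stmt12Aux.aux4 _ hn3
  have hm6 : 6*P ≤ m := le_of_lt hcase
  set TL : Finset (Lit n) := Finset.univ.filter (fun v : Lit n => σ v.1 = v.2) with hTLdef
  set FL : Finset (Lit n) := Finset.univ.filter (fun v : Lit n => ¬ σ v.1 = v.2) with hFLdef
  have hTLcard : TL.card = n := Stmt12Aux.true_lits_card σ
  have hFLcard : FL.card = n := Stmt12Aux.false_lits_card σ
  have hTLFL : ∀ v : Lit n, v ∈ TL → v ∈ FL → False := by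
    intro v h1 h2
    rw [hTLdef] at h1; rw [hFLdef] at h2
    exact (Finset.mem_filter.1 h2).2 (Finset.mem_filter.1 h1).2
  have hLitcard : (Finset.univ : Finset (Lit n)).card = 2*n := by
    rw [Finset.card_univ]
    simp only [Fintype.card_prod, Fintype.card_fin, Fintype.card_bool]
    ring
  -- degree functions
  set aT : Finset (Lit n) → ℕ := fun u => (TL.filter fun v => adjSet T u v).card with haTdef
  set aF : Finset (Lit n) → ℕ := fun u => (FL.filter fun v => adjSet T u v).card with haFdef
  -- real aggregates
  set x : ℝ := ∑ u : Finset (Lit n), (aT u : ℝ) with hxdef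
  set y : ℝ := ∑ u : Finset (Lit n), (aF u : ℝ) with hydef
  set Qa : ℝ := ∑ u : Finset (Lit n), (aT u : ℝ)^2 with hQadef
  set Qf : ℝ := ∑ u : Finset (Lit n), (aF u : ℝ)^2 with hQfdef
  set Qd : ℝ := ∑ u : Finset (Lit n), ((aT u : ℝ) + (aF u : ℝ))^2 with hQddef
  set A : ℝ := ∑ u : Finset (Lit n), (((aT u).choose 2 : ℕ) : ℝ) with hAdef
  set C : ℝ := ∑ u : Finset (Lit n), (((aF u).choose 2 : ℕ) : ℝ) with hCdef
  set B : ℝ := ∑ u : Finset (Lit n), ((aT u : ℝ) * (aF u : ℝ)) with hBdef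
  have hx0 : 0 ≤ x := Finset.sum_nonneg fun u _ => Nat.cast_nonneg _
  have hy0 : 0 ≤ y := Finset.sum_nonneg fun u _ => Nat.cast_nonneg _
  have hA0 : 0 ≤ A := Finset.sum_nonneg fun u _ => Nat.cast_nonneg _
  have hC0 : 0 ≤ C := Finset.sum_nonneg fun u _ => Nat.cast_nonneg _
  have hB0 : 0 ≤ B := Finset.sum_nonneg fun u _ =>
    mul_nonneg (Nat.cast_nonneg _) (Nat.cast_nonneg _)
  -- degree split
  have hsplit : ∀ u : Finset (Lit n),
      (Finset.univ.filter fun v : Lit n => adjSet T u v).card = aT u + aF u := by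
    intro u
    have he : (Finset.univ.filter fun v : Lit n => adjSet T u v)
        = (TL.filter fun v => adjSet T u v) ∪ (FL.filter fun v => adjSet T u v) := by
      ext v
      simp only [Finset.mem_filter, Finset.mem_univ, true_and, Finset.mem_union, hTLdef, hFLdef]
      tauto
    rw [he, Finset.card_union_of_disjoint]
    rw [Finset.disjoint_left]
    intro v h1 h2
    exact hTLFL v (Finset.mem_filter.1 h1).1 (Finset.mem_filter.1 h2).1
  -- total degree
  have hxy : x + y = 3*m := by
    have h1 : ∑ u : Finset (Lit n), (aT u + aF u) = 3 * T.card := by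
      rw [← Stmt12Aux.edge_count T]
      exact Finset.sum_congr rfl fun u _ => (hsplit u).symm
    rw [hxdef, hydef, hmdef, ← Finset.sum_add_distrib]
    rw [show (3:ℝ) * (T.card:ℝ) = ((3 * T.card : ℕ) : ℝ) by push_cast; ring, ← h1]
    push_cast
    ring
  -- choose identities
  have hQaid : Qa = 2*A + x := by
    rw [hQadef, hAdef, hxdef, Finset.mul_sum, ← Finset.sum_add_distrib]
    refine Finset.sum_congr rfl fun u _ => ?_
    rw [Nat.cast_choose_two]
    ring
  have hQfid : Qf = 2*C + y := by
    rw [hQfdef, hCdef, hydef, Finset.mul_sum, ← Finset.sum_add_distrib]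
    refine Finset.sum_congr rfl fun u _ => ?_
    rw [Nat.cast_choose_two]
    ring
  have hQdid : Qd = 2*(A+B+C) + 3*m := by
    rw [← hxy, hQddef, hAdef, hBdef, hCdef, hxdef, hydef]
    rw [← Finset.sum_add_distrib, ← Finset.sum_add_distrib, ← Finset.sum_add_distrib,
      Finset.mul_sum, ← Finset.sum_add_distrib]
    refine Finset.sum_congr rfl fun u _ => ?_
    rw [Nat.cast_choose_two, Nat.cast_choose_two]
    ring
  -- support size bounds
  have hLit2 : Fintype.card (Lit n) = 2*n := by
    simp only [Fintype.card_prod, Fintype.card_fin, Fintype.card_bool]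
    ring
  have hSacard : ((Finset.univ.powersetCard 2 : Finset (Finset (Lit n))).card : ℝ)
      = (n:ℝ) * (2*(n:ℝ) - 1) := by
    rw [Finset.card_powersetCard, Finset.card_univ, hLit2, Nat.cast_choose_two]
    push_cast
    ring
  -- the three classes of pairs of literals
  set TTs := (TL.powersetCard 2 : Finset (Finset (Lit n))) with hTTdef
  set FFs := (FL.powersetCard 2 : Finset (Finset (Lit n))) with hFFdef2
  set Rst := (Finset.univ.powersetCard 2 \ (TTs ∪ FFs) : Finset (Finset (Lit n))) with hRdef
  have hTTcardR : ((TTs.card : ℕ) : ℝ) = (n:ℝ)*((n:ℝ)-1)/2 := by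
    rw [hTTdef, Finset.card_powersetCard, hTLcard, Nat.cast_choose_two]
  have hFFcardR : ((FFs.card : ℕ) : ℝ) = (n:ℝ)*((n:ℝ)-1)/2 := by
    rw [hFFdef2, Finset.card_powersetCard, hFLcard, Nat.cast_choose_two]
  -- Cauchy–Schwarz for aT over all pairs
  have hz_a : ∀ u : Finset (Lit n), u ∉ (Finset.univ.powersetCard 2 : Finset (Finset (Lit n)))
      → aT u = 0 := by
    intro u hu
    by_contra h
    obtain ⟨v, hv⟩ := Finset.card_pos.1 (Nat.pos_of_ne_zero h)
    have hadj : adjSet T u v := (Finset.mem_filter.1 hv).2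
    exact hu (Finset.mem_powersetCard_univ.2 (Stmt12Aux.adj_card_two T u v hadj))
  have hz_f : ∀ u : Finset (Lit n), u ∉ (Finset.univ.powersetCard 2 : Finset (Finset (Lit n)))
      → aF u = 0 := by
    intro u hu
    by_contra h
    obtain ⟨v, hv⟩ := Finset.card_pos.1 (Nat.pos_of_ne_zero h)
    have hadj : adjSet T u v := (Finset.mem_filter.1 hv).2
    exact hu (Finset.mem_powersetCard_univ.2 (Stmt12Aux.adj_card_two T u v hadj))
  have hSaR : ((Finset.univ.powersetCard 2 : Finset (Finset (Lit n))).card : ℝ) ≤ 2*P := by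
    rw [hSacard, hPdef]
    exact Stmt12Aux.aux1 _ hn3
  have hQa2 : x^2 ≤ 2*P*Qa := by
    have h := Stmt12Aux.cs_support (Finset.univ.powersetCard 2) aT hz_a (2*P) hSaR
    rw [hxdef, hQadef]
    exact h
  -- Cauchy–Schwarz for aF over pairs containing a true literal
  have hFFsub : FFs ⊆ (Finset.univ.powersetCard 2 : Finset (Finset (Lit n))) := by
    rw [hFFdef2]
    exact Finset.powersetCard_mono (Finset.subset_univ _)
  have hSf_eq : (Finset.univ.powersetCard 2).filter
        (fun u : Finset (Lit n) => ∃ w ∈ u, σ w.1 = w.2)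
      = Finset.univ.powersetCard 2 \ FFs := by
    ext u
    simp only [Finset.mem_filter, Finset.mem_sdiff, Finset.mem_powersetCard_univ, hFFdef2,
      Finset.mem_powersetCard]
    constructor
    · rintro ⟨hc, w, hw, hsw⟩
      refine ⟨hc, fun hsub => ?_⟩
      have hmem : w ∈ FL := hsub.1 hw
      rw [hFLdef] at hmem
      exact (Finset.mem_filter.1 hmem).2 hsw
    · rintro ⟨hc, hnot⟩
      refine ⟨hc, ?_⟩
      by_contra hall
      push_neg at hall
      refine hnot ⟨fun w hw => ?_, hc.2⟩
      rw [hFLdef]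
      exact Finset.mem_filter.2 ⟨Finset.mem_univ _, hall w hw⟩
  have hSfcard : (((Finset.univ.powersetCard 2).filter
      (fun u : Finset (Lit n) => ∃ w ∈ u, σ w.1 = w.2)).card : ℝ) ≤ (3/2)*P := by
    rw [hSf_eq, Finset.card_sdiff_of_subset hFFsub, Nat.cast_sub (Finset.card_le_card hFFsub),
      hSacard, hFFcardR, hPdef]
    exact Stmt12Aux.aux2 _ hn3
  have hQf2 : y^2 ≤ (3/2)*P*Qf := by
    have hz : ∀ u : Finset (Lit n), u ∉ (Finset.univ.powersetCard 2).filter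
        (fun u : Finset (Lit n) => ∃ w ∈ u, σ w.1 = w.2) → aF u = 0 := by
      intro u hu
      by_contra h
      obtain ⟨v, hv⟩ := Finset.card_pos.1 (Nat.pos_of_ne_zero h)
      have hvFL : v ∈ FL := (Finset.mem_filter.1 hv).1
      have hadj : adjSet T u v := (Finset.mem_filter.1 hv).2
      rw [hFLdef] at hvFL
      have hw := Stmt12Aux.adj_false_true T σ hσ u v hadj (Finset.mem_filter.1 hvFL).2
      exact hu (Finset.mem_filter.2 ⟨Finset.mem_powersetCard_univ.2
        (Stmt12Aux.adj_card_two T u v hadj), hw⟩)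
    have h := Stmt12Aux.cs_support _ aF hz ((3/2)*P) hSfcard
    rw [hydef, hQfdef]
    exact h
  -- Cauchy–Schwarz for the total degree
  have hQd2 : (3*m)^2 ≤ 2*P*Qd := by
    have hz : ∀ u : Finset (Lit n), u ∉ (Finset.univ.powersetCard 2 : Finset (Finset (Lit n)))
        → aT u + aF u = 0 := fun u hu => by rw [hz_a u hu, hz_f u hu]
    have h := Stmt12Aux.cs_support (Finset.univ.powersetCard 2)
      (fun u => aT u + aF u) hz (2*P) hSaR
    have e1 : ∑ u : Finset (Lit n), ((aT u + aF u : ℕ) : ℝ) = x + y := by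
      rw [hxdef, hydef, ← Finset.sum_add_distrib]
      push_cast
      rfl
    have e2 : ∑ u : Finset (Lit n), ((aT u + aF u : ℕ) : ℝ)^2 = Qd := by
      rw [hQddef]
      refine Finset.sum_congr rfl fun u _ => ?_
      push_cast
      ring
    rw [← hxy, ← e1, ← e2]
    exact h
  -- the per-class pair sums
  have hApairN : ∑ p ∈ TTs, Stmt12Aux.bpair T p
      = ∑ u : Finset (Lit n), (aT u).choose 2 := by
    rw [hTTdef]
    exact Stmt12Aux.pair_swap T TL
  have hCpairN : ∑ p ∈ FFs, Stmt12Aux.bpair T p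
      = ∑ u : Finset (Lit n), (aF u).choose 2 := by
    rw [hFFdef2]
    exact Stmt12Aux.pair_swap T FL
  have hBpairN : ∑ p ∈ Rst, Stmt12Aux.bpair T p
      = ∑ u : Finset (Lit n), (aT u) * (aF u) := by
    rw [hRdef, hTTdef, hFFdef2]
    exact Stmt12Aux.rest_swap T σ TL FL hTLdef hFLdef
  have hApair : ∑ p ∈ TTs, ((Stmt12Aux.bpair T p : ℕ) : ℝ) = A := by
    rw [hAdef, ← Nat.cast_sum, ← Nat.cast_sum, hApairN]
  have hCpair : ∑ p ∈ FFs, ((Stmt12Aux.bpair T p : ℕ) : ℝ) = C := by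
    rw [hCdef, ← Nat.cast_sum, ← Nat.cast_sum, hCpairN]
  have hBpair : ∑ p ∈ Rst, ((Stmt12Aux.bpair T p : ℕ) : ℝ) = B := by
    have : B = ∑ u : Finset (Lit n), (((aT u) * (aF u) : ℕ) : ℝ) := by
      rw [hBdef]
      refine Finset.sum_congr rfl fun u _ => ?_
      push_cast
      ring
    rw [this, ← Nat.cast_sum, ← Nat.cast_sum, hBpairN]
  -- class cardinalities
  have hsubU : TTs ∪ FFs ⊆ (Finset.univ.powersetCard 2 : Finset (Finset (Lit n))) := by
    refine Finset.union_subset ?_ hFFsub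
    rw [hTTdef]
    exact Finset.powersetCard_mono (Finset.subset_univ _)
  have hdisjTF : Disjoint TTs FFs := by
    rw [Finset.disjoint_left]
    intro p hp hp'
    rw [hTTdef, Finset.mem_powersetCard] at hp
    rw [hFFdef2, Finset.mem_powersetCard] at hp'
    have hpos : 0 < p.card := by omega
    obtain ⟨v, hv⟩ := Finset.card_pos.1 hpos
    exact hTLFL v (hp.1 hv) (hp'.1 hv)
  have hTTcard : ((TTs.card : ℕ) : ℝ) ≤ P/2 := by
    rw [hTTcardR, hPdef]
    exact Stmt12Aux.aux3 _ hn3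
  have hFFcard : ((FFs.card : ℕ) : ℝ) ≤ P/2 := by
    rw [hFFcardR, hPdef]
    exact Stmt12Aux.aux3 _ hn3
  have hRstcard : ((Rst.card : ℕ) : ℝ) ≤ P := by
    have h1 : Rst.card + (TTs ∪ FFs).card
        = (Finset.univ.powersetCard 2 : Finset (Finset (Lit n))).card := by
      rw [hRdef]
      exact Finset.card_sdiff_add_card_eq_card hsubU
    have h2 : (TTs ∪ FFs).card = TTs.card + FFs.card := Finset.card_union_of_disjoint hdisjTF
    rw [h2] at h1
    have h5 : ((Rst.card : ℕ) : ℝ) + (((TTs.card : ℕ) : ℝ) + ((FFs.card : ℕ) : ℝ))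
        = (n:ℝ) * (2*(n:ℝ) - 1) := by
      rw [← hSacard, ← h1]
      push_cast
      ring
    rw [hTTcardR, hFFcardR] at h5
    rw [hPdef]
    exact Stmt12Aux.auxRst _ _ hn3 h5
  -- split kappaSet over the three classes
  have hNsplit : kappaSet T = ∑ p ∈ Rst, (Stmt12Aux.bpair T p).choose 2
      + (∑ p ∈ TTs, (Stmt12Aux.bpair T p).choose 2
        + ∑ p ∈ FFs, (Stmt12Aux.bpair T p).choose 2) := by
    have h0 : kappaSet T = ∑ p ∈ (Finset.univ.powersetCard 2 : Finset (Finset (Lit n))),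
        (Stmt12Aux.bpair T p).choose 2 := rfl
    rw [h0, ← Finset.sum_sdiff hsubU, Finset.sum_union hdisjTF, ← hRdef]
  have hksplit : (kappaSet T : ℝ) = ∑ p ∈ Rst, (((Stmt12Aux.bpair T p).choose 2 : ℕ) : ℝ)
      + (∑ p ∈ TTs, (((Stmt12Aux.bpair T p).choose 2 : ℕ) : ℝ)
        + ∑ p ∈ FFs, (((Stmt12Aux.bpair T p).choose 2 : ℕ) : ℝ)) := by
    rw [hNsplit]
    push_cast
    ring
  -- per-class convexity bounds
  have hKTT := Stmt12Aux.class_bound TTs (Stmt12Aux.bpair T) (P/2) (by positivity) hTTcard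
  have hKFF := Stmt12Aux.class_bound FFs (Stmt12Aux.bpair T) (P/2) (by positivity) hFFcard
  have hKR := Stmt12Aux.class_bound Rst (Stmt12Aux.bpair T) P hP0 hRstcard
  rw [hApair] at hKTT
  rw [hCpair] at hKFF
  rw [hBpair] at hKR
  have e : 2*(P/2) = P := by ring
  rw [e] at hKTT hKFF
  -- the analytic inequality
  have hfinal := Stmt12Aux.final_ineq P m x y A B C Qa Qf Qd hx0 hy0 hxy hB0 hA0 hC0
    hQa2 hQf2 hQd2 hQaid hQfid hQdid hm6 hP9
  have hchain : A^2/P + C^2/P + B^2/(2*P) - (A+B+C)/2 ≤ (kappaSet T : ℝ) := by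
    rw [hksplit]
    have h' := add_le_add hKR (add_le_add hKTT hKFF)
    calc A^2/P + C^2/P + B^2/(2*P) - (A+B+C)/2
        = (B^2/(2*P) - B/2) + ((A^2/P - A/2) + (C^2/P - C/2)) := by ring
      _ ≤ _ := h'
  have hPn : (n:ℝ)^6 = P^3 := by rw [hPdef]; ring
  have hPn2 : (n:ℝ)^4 = P^2 := by rw [hPdef]; ring
  rw [hPn, hPn2]
  exact le_trans hfinal hchain
end

section
/- For all integers n ≥ 10 and 1 ≤ m ≤ √10 · n^{5/2} and every probability distribution D in D_4(n,m), E_{C∼D}[ m̃(C)⁴ ] ≥ m⁴ − (125/6)·m³·n², where m̃(C) denotes the number of pairwise distinct clauses occurring in C. -/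
open scoped Classical

/-!
A position whose clause already occurred earlier is the larger index of a pair `i < j` with
`c_i = c_j`, so `m ≤ m̃ + ξ`. The tangent line of `y ↦ y⁴` at `m` turns this into
`m̃⁴ ≥ m⁴ - 4 m³ ξ`, and by linearity of expectation it remains to compute
`E ξ = binom(m, 2) / M`, which only needs pairwise uniformity. Pairwise uniformity follows from
4-wise uniformity by summing out positions, once the total mass has forced the number of
clauses to be `M`. For `m ≤ 3` the claimed lower bound is nonpositive.
-/

open Finset

section Probability

variable {α β : Type*} [Fintype α] (D : α → ℝ)

lemma pr_true : pr D (fun _ => True) = ∑ a, D a := by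
  simp [pr]

lemma sum_pr_and_eq [Fintype β] (P : α → Prop) (F : α → β) :
    ∑ b, pr D (fun a => P a ∧ F a = b) = pr D P := by
  rw [pr, ← sum_fiberwise _ F D]
  simp only [pr, filter_filter]
  congr!

lemma sum_mul_card_filter (s : Finset β) (P : α → β → Prop) [∀ a, DecidablePred (P a)] :
    ∑ a, D a * #(s.filter (P a)) = ∑ b ∈ s, pr D (fun a => P a b) := by
  simp only [card_filter, Nat.cast_sum, mul_sum, pr, sum_filter]
  rw [sum_comm]
  exact sum_congr rfl fun b _ => sum_congr rfl fun a _ => by split_ifs <;> simp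

end Probability

lemma card_le_card_image_add_card_filter_lt_eq {ι γ : Type*} [Fintype ι] [LinearOrder ι]
    [DecidableEq γ] (f : ι → γ) :
    Fintype.card ι ≤ #(univ.image f) + #{p : ι × ι | p.1 < p.2 ∧ f p.1 = f p.2} := by
  let repeated := ({p : ι × ι | p.1 < p.2 ∧ f p.1 = f p.2} : Finset _).image Prod.snd
  have h_first : #(univ \ repeated) ≤ #(univ.image f) := by
    refine card_le_card_of_injOn f (fun i _ => mem_image_of_mem f (mem_univ i)) ?_
    intro i hi j hj hij
    simp only [repeated, coe_sdiff, coe_univ, Set.mem_sdiff, Set.mem_univ, true_and, coe_image,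
      Set.mem_image, mem_coe, mem_filter, mem_univ, Prod.exists, not_exists] at hi hj
    by_contra hne
    rcases lt_or_gt_of_ne hne with h | h
    · exact hj i j ⟨⟨h, hij⟩, rfl⟩
    · exact hi j i ⟨⟨h, hij.symm⟩, rfl⟩
  have h_split := card_sdiff_add_card_eq_card (subset_univ repeated)
  have h_repeated : #repeated ≤ #{p : ι × ι | p.1 < p.2 ∧ f p.1 = f p.2} := card_image_le
  rw [card_univ] at h_split
  omega

lemma le_distinctCount_add_xi {n m : ℕ} (C : SatInstance n m) :
    m ≤ distinctCount C + xi C := by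
  unfold distinctCount xi
  convert card_le_card_image_add_card_filter_lt_eq C
  simp

lemma pow_four_sub_le {x t a : ℝ} (hx : 0 ≤ x) (h : x - t ≤ a) :
    x ^ 4 - 4 * x ^ 3 * t ≤ a ^ 4 := by
  -- tangent line of the convex function `y ↦ y ^ 4` at `x`
  have tangent : x ^ 4 + 4 * x ^ 3 * (a - x) ≤ a ^ 4 := by
    nlinarith [mul_nonneg (sq_nonneg (a - x)) (add_nonneg (sq_nonneg (a + x)) (sq_nonneg x))]
  nlinarith [mul_le_mul_of_nonneg_left (show -t ≤ a - x by linarith) (pow_nonneg hx 3)]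

section KWiseUniform

variable {n m : ℕ} {D : SatInstance n m → ℝ}

lemma KWiseUniform.card_clause {k : ℕ} (hD : IsDistribution D) (h : KWiseUniform n m k D)
    (hk : k ≠ 0) (hkm : k ≤ m) : Fintype.card (Clause n) = 8 * n.choose 3 := by
  have h_mass : ((Fintype.card (Clause n) : ℝ) * (1 / (8 * n.choose 3))) ^ k = 1 := by
    calc _ = ∑ t : Fin k → Clause n,
          pr D (fun C => True ∧ (fun j => C (Fin.castLE hkm j)) = t) := by
          simp only [true_and, funext_iff, h _ (Fin.castLE_injective hkm), sum_const, card_univ,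
            Fintype.card_fun, Fintype.card_fin, nsmul_eq_mul, Nat.cast_pow, mul_pow]
      _ = 1 := by rw [sum_pr_and_eq, pr_true, hD.2]
  have h_ratio := (pow_eq_one_iff_of_nonneg (by positivity) hk).1 h_mass
  have hM : (8 * n.choose 3 : ℝ) ≠ 0 := by
    rintro hM
    simp [hM] at h_ratio
  rw [mul_one_div, div_eq_one_iff_eq hM] at h_ratio
  exact_mod_cast h_ratio

lemma KWiseUniform.of_succ {k : ℕ} (hD : IsDistribution D) (h : KWiseUniform n m (k + 1) D)
    (hn : 3 ≤ n) (hkm : k < m) : KWiseUniform n m k D := by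
  have hK := h.card_clause hD k.succ_ne_zero hkm
  have hM : (n.choose 3 : ℝ) ≠ 0 := by exact_mod_cast (Nat.choose_pos hn).ne'
  intro idx hidx t
  obtain ⟨a, ha⟩ : ∃ a, a ∉ Set.range idx := by
    by_contra! h_surj
    have := Fintype.card_le_of_surjective idx h_surj
    simp only [Fintype.card_fin] at this
    omega
  have h_cons : Function.Injective (Fin.cons a idx : Fin (k + 1) → Fin m) :=
    Fin.cons_injective_iff.2 ⟨ha, hidx⟩
  rw [← sum_pr_and_eq D _ fun C => C a]
  calc ∑ s, pr D (fun C => (∀ j, C (idx j) = t j) ∧ C a = s)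
      = ∑ s, pr D (fun C => ∀ j, C ((Fin.cons a idx : Fin (k + 1) → Fin m) j) =
          (Fin.cons s t : Fin (k + 1) → Clause n) j) := by
        simp only [Fin.forall_fin_succ, Fin.cons_zero, Fin.cons_succ, and_comm]
    _ = (1 / (8 * n.choose 3 : ℝ)) ^ k := by
        simp only [h _ h_cons, sum_const, card_univ, hK, nsmul_eq_mul]
        push_cast
        rw [pow_succ]
        field_simp

lemma KWiseUniform.pr_apply_eq_apply (hD : IsDistribution D) (h : KWiseUniform n m 2 D)
    (hn : 3 ≤ n) {i j : Fin m} (hij : i ≠ j) :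
    pr D (fun C => C i = C j) = 1 / (8 * n.choose 3) := by
  have hK := h.card_clause hD two_ne_zero (by have := Fin.val_ne_iff.2 hij; omega)
  have hM : (n.choose 3 : ℝ) ≠ 0 := by exact_mod_cast (Nat.choose_pos hn).ne'
  have h_inj : Function.Injective ![i, j] := by
    intro a b
    fin_cases a <;> fin_cases b <;> simp [hij, hij.symm]
  rw [← sum_pr_and_eq D _ fun C => C j]
  calc ∑ s, pr D (fun C => C i = C j ∧ C j = s)
      = ∑ s : Clause n, pr D (fun C => ∀ l, C (![i, j] l) = ![s, s] l) := by
        refine sum_congr rfl fun s _ => congrArg (pr D) (funext fun C => propext ?_)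
        simp only [Fin.forall_fin_two, Matrix.cons_val_zero, Matrix.cons_val_one]
        constructor <;> rintro ⟨h_eq, rfl⟩ <;> exact ⟨h_eq, rfl⟩
    _ = 1 / (8 * n.choose 3) := by
        simp only [h _ h_inj, sum_const, card_univ, hK, nsmul_eq_mul]
        field_simp
        push_cast
        ring

lemma KWiseUniform.sum_mul_xi (hD : IsDistribution D) (h : KWiseUniform n m 2 D)
    (hn : 3 ≤ n) : ∑ C, D C * (xi C : ℝ) = m.choose 2 / (8 * n.choose 3) := by
  have h_xi : ∀ C : SatInstance n m,
      xi C = #(({p : Fin m × Fin m | p.1 < p.2} : Finset _).filter fun p => C p.1 = C p.2) := by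
    intro C
    rw [xi, filter_filter]
  simp only [h_xi, sum_mul_card_filter]
  rw [sum_congr rfl fun p hp => h.pr_apply_eq_apply hD hn (mem_filter.1 hp).2.ne, sum_const,
    Fintype.card_product_filter_lt, Fintype.card_fin, nsmul_eq_mul, mul_one_div]

end KWiseUniform

lemma sq_le_of_le_sqrt_mul_rpow {a x y : ℝ} (ha : 0 ≤ a) (hx : 0 ≤ x) (hy : 0 ≤ y)
    (h : y ≤ √a * x ^ ((5 : ℝ) / 2)) : y ^ 2 ≤ a * x ^ 5 := by
  calc y ^ 2 ≤ (√a * x ^ ((5 : ℝ) / 2)) ^ 2 := pow_le_pow_left₀ hy h 2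
    _ = a * x ^ 5 := by
      rw [mul_pow, Real.sq_sqrt ha, ← Real.rpow_natCast (x ^ _), ← Real.rpow_mul hx]
      norm_num

lemma six_mul_cast_choose_three (n : ℕ) : 6 * (n.choose 3 : ℝ) = n * (n - 1) * (n - 2) := by
  have h := Nat.descFactorial_eq_factorial_mul_choose n 3
  rcases n with _ | _ | _ | k
  · simp
  · norm_num [Nat.choose]
  · norm_num [Nat.choose]
  · simp only [Nat.descFactorial, Nat.factorial] at h
    rw [← Nat.cast_ofNat, ← Nat.cast_mul]
    simp only [Nat.succ_eq_add_one, zero_add, Nat.reduceAdd, Nat.reduceMul] at h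
    rw [← h]
    push_cast
    ring

lemma four_mul_choose_two_div_le {n m : ℕ} (hn : 10 ≤ n) (hm : (m : ℝ) ^ 2 ≤ 10 * n ^ 5) :
    4 * (m.choose 2 : ℝ) / (8 * n.choose 3) ≤ 125 / 6 * n ^ 2 := by
  have hn' : (10 : ℝ) ≤ n := by exact_mod_cast hn
  have h_choose := six_mul_cast_choose_three n
  have h_pairs : 2 * (m.choose 2 : ℝ) ≤ m ^ 2 := by
    rw [Nat.cast_choose_two]
    nlinarith [(Nat.cast_nonneg m : (0 : ℝ) ≤ m)]
  have h_clauses : (8 * n.choose 3 : ℝ) = 8 / 6 * (n * (n - 1) * (n - 2)) := by linarith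
  rw [h_clauses, div_le_iff₀ (by nlinarith)]
  -- equality at `n = 10`
  have h_poly : 20 * (n : ℝ) ^ 5 ≤ 125 / 6 * n ^ 2 * (8 / 6 * (n * (n - 1) * (n - 2))) := by
    nlinarith [mul_nonneg (pow_nonneg (by linarith : (0 : ℝ) ≤ n) 3)
      (mul_nonneg (by linarith : (0 : ℝ) ≤ n - 10) (by linarith : (0 : ℝ) ≤ 7 * n - 5))]
  linarith

theorem stmt13_general (n m : ℕ) (hn : 10 ≤ n)
    (hm : (m : ℝ) ≤ Real.sqrt 10 * (n : ℝ) ^ ((5 : ℝ) / 2))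
    (D : SatInstance n m → ℝ) (hD : IsDistribution D) (h4 : KWiseUniform n m 4 D) :
    (m : ℝ) ^ 4 - (125 / 6) * (m : ℝ) ^ 3 * (n : ℝ) ^ 2
      ≤ ∑ C : SatInstance n m, D C * (distinctCount C : ℝ) ^ 4 := by
  rcases lt_or_ge m 4 with hm4 | hm4
  · have hn' : (10 : ℝ) ≤ n := by exact_mod_cast hn
    have h_nonneg : 0 ≤ ∑ C : SatInstance n m, D C * (distinctCount C : ℝ) ^ 4 :=
      sum_nonneg fun C _ => mul_nonneg (hD.1 C) (by positivity)
    have hm3 : (m : ℝ) ≤ 3 := by exact_mod_cast Nat.le_of_lt_succ hm4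
    have hm_cube := pow_nonneg (Nat.cast_nonneg m : (0 : ℝ) ≤ m) 3
    nlinarith [mul_le_mul_of_nonneg_right hm3 hm_cube,
      mul_le_mul_of_nonneg_left (by nlinarith : (100 : ℝ) ≤ n ^ 2) hm_cube]
  have h2 := (h4.of_succ hD (by omega) hm4).of_succ hD (by omega) (by omega)
  have h_bound := four_mul_choose_two_div_le hn
    (sq_le_of_le_sqrt_mul_rpow (by norm_num) (by positivity) (by positivity) hm)
  calc (m : ℝ) ^ 4 - 125 / 6 * m ^ 3 * n ^ 2
      ≤ m ^ 4 - m ^ 3 * (4 * m.choose 2 / (8 * n.choose 3)) := by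
        nlinarith [pow_nonneg (Nat.cast_nonneg m : (0 : ℝ) ≤ m) 3]
    _ = ∑ C, D C * ((m : ℝ) ^ 4 - 4 * m ^ 3 * xi C) := by
        simp only [mul_sub, sum_sub_distrib, ← sum_mul, hD.2, mul_left_comm (D _), ← mul_sum,
          h2.sum_mul_xi hD (by omega)]
        ring
    _ ≤ ∑ C, D C * (distinctCount C : ℝ) ^ 4 := by
        refine sum_le_sum fun C _ => mul_le_mul_of_nonneg_left ?_ (hD.1 C)
        exact pow_four_sub_le (Nat.cast_nonneg m)
          (sub_le_iff_le_add.2 (by exact_mod_cast le_distinctCount_add_xi C))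

/-- For all `n ≥ 10`, `1 ≤ m ≤ √10·n^{5/2}` and every `D ∈ 𝔇₄(n,m)`,
`E_{C∼D}[m̃(C)⁴] ≥ m⁴ − (125/6)·m³·n²`. -/
theorem stmt13 (n m : ℕ) (hn : 10 ≤ n) (hm1 : 1 ≤ m)
    (hm : (m : ℝ) ≤ Real.sqrt 10 * (n : ℝ) ^ ((5 : ℝ) / 2))
    (D : SatInstance n m → ℝ) (hD : IsDistribution D) (h4 : KWiseUniform n m 4 D) :
    (m : ℝ) ^ 4 - (125 / 6) * (m : ℝ) ^ 3 * (n : ℝ) ^ 2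
      ≤ ∑ C : SatInstance n m, D C * (distinctCount C : ℝ) ^ 4 :=
  stmt13_general n m hn hm D hD h4
end

section
/- Let C be a 3-SAT instance with m clauses over n ≥ 3 variables. If the variable hypergraph of C contains no Berge cycle of any length ℓ ≥ 2, then C is satisfiable. -/
open scoped Classical

namespace Stmt16Aux

variable {n m : ℕ}

/-- Two clause indices are adjacent if distinct and their variable sets meet. -/
def Adj (C : SatInstance n m) (i j : Fin m) : Prop :=
  i ≠ j ∧ ¬ Disjoint (clVars (C i)) (clVars (C j))

lemma Adj.symm' {C : SatInstance n m} {i j : Fin m} (h : Adj C i j) : Adj C j i :=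
  ⟨h.1.symm, fun hd => h.2 hd.symm⟩

/-- If every index in `s` has, for every forbidden `p`, a neighbor in `s` distinct from `p`,
then there is a "pre-cycle": an injective cyclic sequence of length ≥ 3 with consecutive
members adjacent. -/
lemma precycle {C : SatInstance n m} (s : Finset (Fin m))
    {i₀ : Fin m} (h₀ : i₀ ∈ s)
    (Hnb : ∀ i ∈ s, ∀ p : Fin m, ∃ k ∈ s, Adj C i k ∧ k ≠ p) :
    ∃ ℓ, 3 ≤ ℓ ∧ ∃ f : Fin ℓ → Fin m, Function.Injective f ∧
      ∀ i j : Fin ℓ, CycConsec ℓ i j → Adj C (f i) (f j) := by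
  classical
  have pick_ex : ∀ i p : Fin m, ∃ k, (i ∈ s → (k ∈ s ∧ Adj C i k ∧ k ≠ p)) := by
    intro i p
    by_cases hi : i ∈ s
    · obtain ⟨k, hk1, hk2⟩ := Hnb i hi p
      exact ⟨k, fun _ => ⟨hk1, hk2⟩⟩
    · exact ⟨i₀, fun h => absurd h hi⟩
  choose pick pickSpec using pick_ex
  let F : ℕ → Fin m × Fin m := fun k =>
    Nat.rec (i₀, pick i₀ i₀) (fun _ q => (q.2, pick q.2 q.1)) k
  have hstep : ∀ k, F (k+1) = ((F k).2, pick (F k).2 (F k).1) := fun _ => rfl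
  have hF : ∀ k, (F k).1 ∈ s ∧ (F k).2 ∈ s ∧ Adj C (F k).1 (F k).2 := by
    intro k
    induction k with
    | zero =>
      have h := pickSpec i₀ i₀ h₀
      exact ⟨h₀, h.1, h.2.1⟩
    | succ k ih =>
      have h := pickSpec (F k).2 (F k).1 ih.2.1
      rw [hstep k]
      exact ⟨ih.2.1, h.1, h.2.1⟩
  set g : ℕ → Fin m := fun k => (F k).1 with hgdef
  have hg1 : ∀ k, g (k+1) = (F k).2 := fun k => rfl
  have hgadj : ∀ k, Adj C (g k) (g (k+1)) := by
    intro k; rw [hg1 k]; exact (hF k).2.2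
  have hgne : ∀ k, g (k+2) ≠ g k := by
    intro k
    have h := pickSpec (F k).2 (F k).1 (hF k).2.1
    have : g (k+2) = pick (F k).2 (F k).1 := by
      rw [hg1 (k+1), hstep k]
    rw [this]
    exact h.2.2
  -- pigeonhole
  obtain ⟨x, y, hxy, hgxy⟩ := Finite.exists_ne_map_eq_of_infinite g
  have hP : ∃ b, ∃ a, a < b ∧ g a = g b := by
    rcases Nat.lt_or_ge x y with h | h
    · exact ⟨y, x, h, hgxy⟩
    · exact ⟨x, y, lt_of_le_of_ne h (fun h' => hxy h'.symm), hgxy.symm⟩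
  obtain ⟨a, hab, hgab⟩ := Nat.find_spec hP
  set b := Nat.find hP with hbdef
  have hmin : ∀ y, y < b → ¬ ∃ a, a < y ∧ g a = g y := fun y hy => Nat.find_min hP hy
  have hl3 : 3 ≤ b - a := by
    have h1 : b ≠ a + 1 := by
      intro h
      rw [h] at hgab
      exact (hgadj a).1 hgab
    have h2 : b ≠ a + 2 := by
      intro h
      apply hgne a
      rw [← h]
      exact hgab.symm
    omega
  refine ⟨b - a, hl3, fun k => g (a + (k : ℕ)), ?_, ?_⟩
  · intro k₁ k₂ hEq
    by_contra hne
    have hvne : (k₁ : ℕ) ≠ (k₂ : ℕ) := fun h => hne (Fin.ext h)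
    have hk₁ := k₁.isLt
    have hk₂ := k₂.isLt
    rcases Nat.lt_or_ge (k₁ : ℕ) (k₂ : ℕ) with h | h
    · exact hmin (a + (k₂ : ℕ)) (by omega) ⟨a + (k₁ : ℕ), by omega, hEq⟩
    · exact hmin (a + (k₁ : ℕ)) (by omega) ⟨a + (k₂ : ℕ), by omega, hEq.symm⟩
  · intro i j hcc
    show Adj C (g (a + (i : ℕ))) (g (a + (j : ℕ)))
    have hi := i.isLt
    have hj := j.isLt
    rcases Nat.lt_or_ge ((i : ℕ) + 1) (b - a) with h | h
    · have hjv : (j : ℕ) = (i : ℕ) + 1 := by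
        rw [hcc, Nat.mod_eq_of_lt h]
      have heq : a + (j : ℕ) = (a + (i : ℕ)) + 1 := by omega
      rw [heq]
      exact hgadj (a + (i : ℕ))
    · have hiv : (i : ℕ) + 1 = b - a := by omega
      have hjv : (j : ℕ) = 0 := by rw [hcc, hiv, Nat.mod_self]
      have heq : a + (i : ℕ) = b - 1 := by omega
      have h1 := hgadj (b - 1)
      rw [Nat.sub_add_cancel (by omega : 1 ≤ b)] at h1
      rw [← hgab] at h1
      rw [heq, hjv]
      exact h1

/-- No pre-cycle can exist: a minimal one would be a Berge cycle. -/
lemma no_precycle {C : SatInstance n m}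
    (h2 : ∀ i j : Fin m, i ≠ j → (clVars (C i) ∩ clVars (C j)).card ≤ 1)
    (hcyc : ∀ ℓ : ℕ, 3 ≤ ℓ → ∀ f : Fin ℓ → Fin m, ¬ IsBergeCycleOrder C f)
    (h : ∃ ℓ, 3 ≤ ℓ ∧ ∃ f : Fin ℓ → Fin m, Function.Injective f ∧
      ∀ i j : Fin ℓ, CycConsec ℓ i j → Adj C (f i) (f j)) : False := by
  classical
  obtain ⟨hL3, f, hfinj, hfadj⟩ := Nat.find_spec h
  have hcons : ∀ i j : Fin (Nat.find h), CycConsec (Nat.find h) i j →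
      (clVars (C (f i)) ∩ clVars (C (f j))).card = 1 := by
    intro i j hc
    have hadj := hfadj i j hc
    obtain ⟨x, hx1, hx2⟩ := Finset.not_disjoint_iff.mp hadj.2
    have h0 : 0 < (clVars (C (f i)) ∩ clVars (C (f j))).card :=
      Finset.card_pos.mpr ⟨x, Finset.mem_inter.mpr ⟨hx1, hx2⟩⟩
    have h1 := h2 _ _ hadj.1
    omega
  have key : ∀ i j : Fin (Nat.find h), (i : ℕ) < (j : ℕ) →
      ¬ CycConsec (Nat.find h) i j → ¬ CycConsec (Nat.find h) j i →
      ¬ Adj C (f i) (f j) := by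
    intro i j hlt hc1 hc2 hadj
    have hjL := j.isLt
    have hne1 : (j : ℕ) ≠ (i : ℕ) + 1 := by
      intro h'
      exact hc1 (by show (j : ℕ) = ((i : ℕ) + 1) % Nat.find h
                    rw [h']
                    exact (Nat.mod_eq_of_lt (by omega)).symm)
    have hne2 : ¬ ((i : ℕ) = 0 ∧ (j : ℕ) = Nat.find h - 1) := by
      rintro ⟨h0, h1⟩
      apply hc2
      show (i : ℕ) = ((j : ℕ) + 1) % Nat.find h
      rw [h0, h1, Nat.sub_add_cancel (by omega), Nat.mod_self]
    have hL'3 : 3 ≤ (j : ℕ) - (i : ℕ) + 1 := by omega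
    have hL'L : (j : ℕ) - (i : ℕ) + 1 < Nat.find h := by omega
    apply Nat.find_min h hL'L
    refine ⟨hL'3, fun k => f ⟨(i : ℕ) + (k : ℕ), by omega⟩, ?_, ?_⟩
    · intro k₁ k₂ hEq
      have h' : (i : ℕ) + (k₁ : ℕ) = (i : ℕ) + (k₂ : ℕ) :=
        congrArg Fin.val (hfinj hEq)
      exact Fin.ext (by omega)
    · intro k k' hcc
      have hk := k.isLt
      have hk' := k'.isLt
      rcases Nat.lt_or_ge ((k : ℕ) + 1) ((j : ℕ) - (i : ℕ) + 1) with hlt' | hge'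
      · have hkv : (k' : ℕ) = (k : ℕ) + 1 := by rw [hcc, Nat.mod_eq_of_lt hlt']
        have hres := hfadj ⟨(i : ℕ) + (k : ℕ), by omega⟩ ⟨(i : ℕ) + (k' : ℕ), by omega⟩
          (by show ((i : ℕ) + (k' : ℕ)) = (((i : ℕ) + (k : ℕ)) + 1) % Nat.find h
              rw [Nat.mod_eq_of_lt (by omega)]; omega)
        exact hres
      · have hk0 : (k' : ℕ) = 0 := by
          have hkeq : (k : ℕ) + 1 = (j : ℕ) - (i : ℕ) + 1 := by omega
          rw [hcc, hkeq, Nat.mod_self]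
        have hres : Adj C (f j) (f i) := Adj.symm' hadj
        have e1 : f (⟨(i : ℕ) + (k : ℕ), by omega⟩ : Fin (Nat.find h)) = f j :=
          congrArg f (Fin.ext (by simp only; omega))
        have e2 : f (⟨(i : ℕ) + (k' : ℕ), by omega⟩ : Fin (Nat.find h)) = f i :=
          congrArg f (Fin.ext (by simp only; omega))
        rw [← e1, ← e2] at hres
        exact hres
  apply hcyc (Nat.find h) hL3 f
  refine ⟨hfinj, hcons, ?_⟩
  intro i j hij hc1 hc2
  by_contra hnd
  have hadj : Adj C (f i) (f j) := ⟨fun hEq => hij (hfinj hEq), hnd⟩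
  rcases Nat.lt_or_ge (i : ℕ) (j : ℕ) with hlt | hge
  · exact key i j hlt hc1 hc2 hadj
  · have hlt : (j : ℕ) < (i : ℕ) :=
      lt_of_le_of_ne hge (fun h' => hij (Fin.ext h'.symm))
    exact key j i hlt hc2 hc1 (Adj.symm' hadj)

/-- In any nonempty set of clause indices, some clause has a private variable. -/
lemma exists_private {C : SatInstance n m}
    (h2 : ∀ i j : Fin m, i ≠ j → (clVars (C i) ∩ clVars (C j)).card ≤ 1)
    (hcyc : ∀ ℓ : ℕ, 3 ≤ ℓ → ∀ f : Fin ℓ → Fin m, ¬ IsBergeCycleOrder C f)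
    (s : Finset (Fin m)) (hs : s.Nonempty) :
    ∃ i ∈ s, ∃ v ∈ clVars (C i), ∀ j ∈ s, j ≠ i → v ∉ clVars (C j) := by
  classical
  by_contra hbad
  push_neg at hbad
  obtain ⟨i₀, hi₀⟩ := hs
  have Hnb : ∀ i ∈ s, ∀ p : Fin m, ∃ k ∈ s, Adj C i k ∧ k ≠ p := by
    intro i hi p
    have hcard : (clVars (C i)).card = 3 := (C i).2.2
    have h13 : 1 < (clVars (C i)).card := by omega
    obtain ⟨v₁, hv₁, v₂, hv₂, hvne⟩ := Finset.one_lt_card.mp h13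
    obtain ⟨j₁, hj₁s, hj₁i, hj₁v⟩ := hbad i hi v₁ hv₁
    obtain ⟨j₂, hj₂s, hj₂i, hj₂v⟩ := hbad i hi v₂ hv₂
    have hjj : j₁ ≠ j₂ := by
      intro hEq
      subst hEq
      have hsub : ({v₁, v₂} : Finset (Fin n)) ⊆ clVars (C i) ∩ clVars (C j₁) := by
        intro x hx
        rcases Finset.mem_insert.mp hx with rfl | hx
        · exact Finset.mem_inter.mpr ⟨hv₁, hj₁v⟩
        · rw [Finset.mem_singleton] at hx
          subst hx
          exact Finset.mem_inter.mpr ⟨hv₂, hj₂v⟩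
      have hle := Finset.card_le_card hsub
      rw [Finset.card_pair hvne] at hle
      have := h2 i j₁ (Ne.symm hj₁i)
      omega
    by_cases hp : j₁ = p
    · exact ⟨j₂, hj₂s, ⟨Ne.symm hj₂i, Finset.not_disjoint_iff.mpr ⟨v₂, hv₂, hj₂v⟩⟩,
        by rw [← hp]; exact hjj.symm⟩
    · exact ⟨j₁, hj₁s, ⟨Ne.symm hj₁i, Finset.not_disjoint_iff.mpr ⟨v₁, hv₁, hj₁v⟩⟩, hp⟩
  exact no_precycle h2 hcyc (precycle s hi₀ Hnb)

/-- Hall's condition for the clause-variable incidence. -/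
lemma hall_cond {C : SatInstance n m}
    (h2 : ∀ i j : Fin m, i ≠ j → (clVars (C i) ∩ clVars (C j)).card ≤ 1)
    (hcyc : ∀ ℓ : ℕ, 3 ≤ ℓ → ∀ f : Fin ℓ → Fin m, ¬ IsBergeCycleOrder C f) :
    ∀ s : Finset (Fin m), s.card ≤ (s.biUnion fun i => clVars (C i)).card := by
  classical
  intro s
  induction s using Finset.strongInduction with
  | _ s ih =>
    rcases s.eq_empty_or_nonempty with rfl | hs
    · simp
    · obtain ⟨i, his, v, hvi, hpriv⟩ := exists_private h2 hcyc s hs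
      have hvmem : v ∈ s.biUnion fun j => clVars (C j) :=
        Finset.mem_biUnion.mpr ⟨i, his, hvi⟩
      have hvnot : v ∉ (s.erase i).biUnion fun j => clVars (C j) := by
        intro hv
        obtain ⟨j, hj, hvj⟩ := Finset.mem_biUnion.mp hv
        exact hpriv j (Finset.mem_of_mem_erase hj) (Finset.ne_of_mem_erase hj) hvj
      have hsub : insert v ((s.erase i).biUnion fun j => clVars (C j)) ⊆
          s.biUnion fun j => clVars (C j) := by
        intro x hx
        rcases Finset.mem_insert.mp hx with rfl | hx
        · exact hvmem
        · exact Finset.biUnion_subset_biUnion_of_subset_left _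
            (Finset.erase_subset _ _) hx
      have hcard := Finset.card_le_card hsub
      rw [Finset.card_insert_of_notMem hvnot] at hcard
      have hIH := ih (s.erase i) (Finset.erase_ssubset his)
      have herase : (s.erase i).card + 1 = s.card := Finset.card_erase_add_one his
      omega

end Stmt16Aux

/-- If the variable hypergraph of a 3-SAT instance `C` over `n ≥ 3` variables contains no
Berge cycle of any length `ℓ ≥ 2` (no two distinct hyperedges share two or more vertices,
and no `ℓ ≥ 3` hyperedges can be cyclically ordered so that consecutive ones share exactly
one vertex and non-consecutive ones are disjoint), then `C` is satisfiable. -/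
theorem stmt16 (n m : ℕ) (hn : 3 ≤ n) (C : SatInstance n m)
    (h2 : ∀ i j : Fin m, i ≠ j → (clVars (C i) ∩ clVars (C j)).card ≤ 1)
    (hcyc : ∀ ℓ : ℕ, 3 ≤ ℓ → ∀ f : Fin ℓ → Fin m, ¬ IsBergeCycleOrder C f) :
    SAT C := by
  classical
  obtain ⟨f, hfinj, hf⟩ :=
    (Finset.all_card_le_biUnion_card_iff_exists_injective
      (fun i : Fin m => clVars (C i))).mp (Stmt16Aux.hall_cond h2 hcyc)
  have hlit : ∀ i : Fin m, ∃ l, l ∈ (C i).1 ∧ l.1 = f i := by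
    intro i
    have h := hf i
    simp only [clVars, Finset.mem_image] at h
    obtain ⟨l, hl, hl2⟩ := h
    exact ⟨l, hl, hl2⟩
  choose lit hmem hfst using hlit
  refine ⟨fun v => if h : ∃ i, f i = v then (lit h.choose).2 else false, fun i => ?_⟩
  refine ⟨lit i, hmem i, ?_⟩
  have hex : ∃ i', f i' = (lit i).1 := ⟨i, (hfst i).symm⟩
  show (if h : ∃ i', f i' = (lit i).1 then (lit h.choose).2 else false) = (lit i).2
  rw [dif_pos hex]
  have hch : hex.choose = i := hfinj (hex.choose_spec.trans (hfst i))
  rw [hch]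
end

section
/- Let n ≥ 3, m ≥ 1, and k ≥ 2 be integers and let C ∼ D_Ind(n,m), i.e., the m clauses are i.i.d. uniform over all 8·binom(n,3) possible clauses. Then the expected number of k-element sets of hyperedge indices of the variable hypergraph of C that form a Berge path of length k is at most m^k · (9/n) · (6/n)^{k−2}. -/
open scoped Classical

/-!
Every Berge path on a `k`-set of clause indices is listed by an injective `f : Fin k → Fin m`,
so it suffices to count such orderings. For a fixed injective `f` the clauses `C ∘ f` are
uniform on `Clause n ^ k`, and clause sequences whose variable sets form a Berge chain are
counted greedily, writing `M = 8 * (n choose 3)` for the number of clauses and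
`V = 8 * (n - 1 choose 2)` for the number of clauses through a fixed variable: the first clause
is arbitrary (`M` choices), the second meets the three variables of the first (`≤ 3V`), and
every later one meets the previous clause outside the clause before it, i.e. in one of two
variables (`≤ 2V`). Since `n * V = 3 * M`, `3V / M = 9 / n` and `2V / M = 6 / n`.
-/

open Finset

section Clauses

variable {n : ℕ}

lemma Clause.card_clVars (c : Clause n) : (clVars c).card = 3 := c.2.2

lemma Clause.injOn_fst (c : Clause n) : Set.InjOn Prod.fst (c.1 : Set (Lit n)) :=
  card_image_iff.mp (c.2.2.trans c.2.1.symm)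

lemma Clause.mem_iff_of_mem_clVars (c : Clause n) {x : Fin n} (hx : x ∈ clVars c) (b : Bool) :
    (x, b) ∈ c.1 ↔ decide ((x, true) ∈ c.1) = b := by
  obtain ⟨⟨y, b₀⟩, h₀, rfl⟩ := mem_image.mp hx
  have hsign : ∀ b', (y, b') ∈ c.1 → b' = b₀ :=
    fun b' h => congrArg Prod.snd (c.injOn_fst h h₀ rfl)
  cases b <;> cases b₀ <;> grind

def clauseOfSigns (A : Finset (Fin n)) (hA : A.card = 3) (σ : A → Bool) : Clause n :=
  ⟨A.attach.image fun x => (x.1, σ x),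
    by rw [card_image_of_injective _ fun x y h => Subtype.ext (congrArg Prod.fst h)]; simpa,
    by rw [image_image]; simpa [Function.comp_def]⟩

lemma clVars_clauseOfSigns (A : Finset (Fin n)) (hA : A.card = 3) (σ : A → Bool) :
    clVars (clauseOfSigns A hA σ) = A := by
  simp [clVars, clauseOfSigns, image_image, Function.comp_def]

def clausesOverEquiv (A : Finset (Fin n)) (hA : A.card = 3) :
    {c : Clause n // clVars c = A} ≃ (A → Bool) where
  toFun c x := decide ((x.1, true) ∈ c.1.1)
  invFun σ := ⟨clauseOfSigns A hA σ, clVars_clauseOfSigns A hA σ⟩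
  left_inv := by
    rintro ⟨c, rfl⟩
    ext ⟨x, b⟩
    simp only [clauseOfSigns, mem_image, mem_attach, true_and, Subtype.exists, Prod.mk.injEq]
    constructor
    · rintro ⟨_, hx, rfl, rfl⟩
      exact (c.mem_iff_of_mem_clVars hx _).mpr rfl
    · intro h
      have hx : x ∈ clVars c := mem_image_of_mem _ h
      exact ⟨x, hx, rfl, (c.mem_iff_of_mem_clVars hx b).mp h⟩
  right_inv σ := by
    funext x
    simp [clauseOfSigns]

lemma card_filter_clVars_eq {A : Finset (Fin n)} (hA : A.card = 3) :
    #{c : Clause n | clVars c = A} = 8 := by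
  rw [← Fintype.card_subtype, Fintype.card_congr (clausesOverEquiv A hA)]
  simp [hA]

lemma card_clause : Fintype.card (Clause n) = 8 * n.choose 3 := by
  rw [← card_univ, card_eq_sum_card_fiberwise (f := clVars) (t := powersetCard 3 univ)
    fun c _ => mem_powersetCard.mpr ⟨subset_univ _, c.card_clVars⟩]
  rw [sum_congr rfl fun A hA => card_filter_clVars_eq (mem_powersetCard.mp hA).2]
  simp [mul_comm]

lemma card_filter_mem_clVars_le (v : Fin n) :
    #{c : Clause n | v ∈ clVars c} ≤ 8 * (n - 1).choose 2 := by
  have hmaps : ∀ c ∈ ({c : Clause n | v ∈ clVars c} : Finset _),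
      (clVars c).erase v ∈ powersetCard 2 (univ.erase v) := by
    intro c hc
    rw [mem_filter] at hc
    exact mem_powersetCard.mpr ⟨erase_subset_erase _ (subset_univ _),
      by rw [card_erase_of_mem hc.2, c.card_clVars]⟩
  refine (card_le_mul_card_image_of_maps_to hmaps 8 fun B hB => ?_).trans (by simp)
  obtain ⟨hBsub, hB⟩ := mem_powersetCard.mp hB
  have hvB : v ∉ B := fun h => notMem_erase v univ (hBsub h)
  calc #{c ∈ ({c : Clause n | v ∈ clVars c} : Finset _) | (clVars c).erase v = B}
      ≤ #{c : Clause n | clVars c = insert v B} := by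
        refine card_le_card fun c hc => ?_
        simp only [mem_filter, mem_univ, true_and] at hc ⊢
        rw [← hc.2, insert_erase hc.1]
    _ = 8 := card_filter_clVars_eq (by rw [card_insert_of_notMem hvB, hB])

lemma card_filter_not_disjoint_clVars_le (S : Finset (Fin n)) :
    #{c : Clause n | ¬Disjoint S (clVars c)} ≤ S.card * (8 * (n - 1).choose 2) := by
  calc #{c : Clause n | ¬Disjoint S (clVars c)}
      ≤ (S.biUnion fun v => {c : Clause n | v ∈ clVars c}).card := by
        refine card_le_card fun c hc => ?_
        obtain ⟨v, hvS, hvc⟩ := not_disjoint_iff.mp (mem_filter.mp hc).2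
        exact mem_biUnion.mpr ⟨v, hvS, mem_filter.mpr ⟨mem_univ _, hvc⟩⟩
    _ ≤ ∑ v ∈ S, #{c : Clause n | v ∈ clVars c} := card_biUnion_le
    _ ≤ S.card * (8 * (n - 1).choose 2) := by
        simpa using sum_le_sum fun v _ => card_filter_mem_clVars_le (n := n) v

end Clauses

def IsBergeChain {V : Type*} [DecidableEq V] {k : ℕ} (E : Fin k → Finset V) : Prop :=
  (∀ i j : Fin k, (j : ℕ) = (i : ℕ) + 1 → (E i ∩ E j).card = 1) ∧
  (∀ i j : Fin k, i ≠ j → (j : ℕ) ≠ (i : ℕ) + 1 → (i : ℕ) ≠ (j : ℕ) + 1 →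
    Disjoint (E i) (E j))

lemma isBergePathOrder_iff {n m k : ℕ} (C : SatInstance n m) (f : Fin k → Fin m) :
    IsBergePathOrder C f ↔ Function.Injective f ∧ IsBergeChain fun i => clVars (C (f i)) :=
  Iff.rfl

namespace IsBergeChain

variable {V : Type*} [DecidableEq V] {k : ℕ}

lemma init {E : Fin (k + 1) → Finset V} (h : IsBergeChain E) : IsBergeChain (Fin.init E) :=
  ⟨fun i j hij => h.1 _ _ (by simpa using hij),
    fun i j hij h₁ h₂ =>
      h.2 _ _ (by simpa using hij) (by simpa using h₁) (by simpa using h₂)⟩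

lemma card_inter_last {E : Fin (k + 2) → Finset V} (h : IsBergeChain E) :
    (E (Fin.last k).castSucc ∩ E (Fin.last (k + 1))).card = 1 :=
  h.1 _ _ (by simp)

lemma disjoint_last {E : Fin (k + 3) → Finset V} (h : IsBergeChain E) :
    Disjoint (E (Fin.last k).castSucc.castSucc) (E (Fin.last (k + 2))) :=
  h.2 _ _ (by simp [Fin.ext_iff]) (by simp) (by simp; omega)

end IsBergeChain

lemma card_filter_le_mul_of_snoc {α : Type*} [Fintype α] {k : ℕ}
    (P : (Fin (k + 1) → α) → Prop) (Q : (Fin k → α) → Prop)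
    [DecidablePred P] [DecidablePred Q] (B : ℕ)
    (hPQ : ∀ g, P g → Q (Fin.init g)) (hB : ∀ h, Q h → #{a | P (Fin.snoc h a)} ≤ B) :
    #{g | P g} ≤ B * #{h | Q h} := by
  refine card_le_mul_card_image_of_maps_to (f := Fin.init)
    (fun g hg => mem_filter.mpr ⟨mem_univ _, hPQ g (mem_filter.mp hg).2⟩) B fun h hh => ?_
  refine le_trans (card_le_card_of_injOn (fun g => g (Fin.last k)) (t := {a | P (Fin.snoc h a)})
    (fun g hg => ?_) fun g hg g' hg' hlast => ?_) (hB h (mem_filter.mp hh).2)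
  · simp only [coe_filter, mem_filter, mem_univ, true_and, Set.mem_ofPred_eq] at hg ⊢
    rw [← hg.2, Fin.snoc_init_self]
    exact hg.1
  · simp only [coe_filter, mem_filter, mem_univ, true_and, Set.mem_ofPred_eq] at hg hg'
    rw [← Fin.snoc_init_self g, ← Fin.snoc_init_self g', hg.2, hg'.2]
    exact congrArg _ hlast

lemma not_disjoint_sdiff_of_card_inter_eq_one {V : Type*} [DecidableEq V] {A A' B : Finset V}
    (h₁ : (A ∩ B).card = 1) (h₂ : Disjoint A' B) : ¬Disjoint (A \ A') B := by
  obtain ⟨v, hv⟩ := card_pos.mp (h₁ ▸ one_pos : 0 < (A ∩ B).card)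
  obtain ⟨hvA, hvB⟩ := mem_inter.mp hv
  exact not_disjoint_iff.mpr
    ⟨v, mem_sdiff.mpr ⟨hvA, fun hvA' => disjoint_left.mp h₂ hvA' hvB⟩, hvB⟩

section BergeChainCount

variable {n : ℕ}

lemma card_snoc_isBergeChain_le_three_mul {k : ℕ} (h : Fin (k + 1) → Clause n) :
    #{c | IsBergeChain fun i => clVars ((Fin.snoc h c : Fin (k + 2) → Clause n) i)}
      ≤ 3 * (8 * (n - 1).choose 2) := by
  calc #{c | IsBergeChain fun i => clVars ((Fin.snoc h c : Fin (k + 2) → Clause n) i)}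
      ≤ #{c : Clause n | ¬Disjoint (clVars (h (Fin.last k))) (clVars c)} := by
        refine card_le_card fun c hc => mem_filter.mpr ⟨mem_univ _, ?_⟩
        have h₁ := (mem_filter.mp hc).2.card_inter_last
        simp only [Fin.snoc_castSucc, Fin.snoc_last] at h₁
        simpa using not_disjoint_sdiff_of_card_inter_eq_one h₁ (disjoint_empty_left _)
    _ ≤ 3 * (8 * (n - 1).choose 2) := by
        simpa [(h _).card_clVars] using card_filter_not_disjoint_clVars_le (clVars (h (Fin.last k)))

lemma card_snoc_isBergeChain_le_two_mul {k : ℕ} (h : Fin (k + 2) → Clause n)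
    (hh : IsBergeChain fun i => clVars (h i)) :
    #{c | IsBergeChain fun i => clVars ((Fin.snoc h c : Fin (k + 3) → Clause n) i)}
      ≤ 2 * (8 * (n - 1).choose 2) := by
  calc #{c | IsBergeChain fun i => clVars ((Fin.snoc h c : Fin (k + 3) → Clause n) i)}
      ≤ #{c : Clause n | ¬Disjoint
          (clVars (h (Fin.last (k + 1))) \ clVars (h (Fin.last k).castSucc)) (clVars c)} := by
        refine card_le_card fun c hc => mem_filter.mpr ⟨mem_univ _, ?_⟩
        have h₁ := (mem_filter.mp hc).2.card_inter_last
        have h₂ := (mem_filter.mp hc).2.disjoint_last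
        simp only [Fin.snoc_castSucc, Fin.snoc_last] at h₁ h₂
        exact not_disjoint_sdiff_of_card_inter_eq_one h₁ h₂
    _ ≤ 2 * (8 * (n - 1).choose 2) := by
        have hcard := card_sdiff_add_card_inter (clVars (h (Fin.last (k + 1))))
          (clVars (h (Fin.last k).castSucc))
        rw [inter_comm, hh.card_inter_last, (h _).card_clVars] at hcard
        refine (card_filter_not_disjoint_clVars_le _).trans_eq ?_
        rw [show (clVars (h (Fin.last (k + 1))) \ clVars (h (Fin.last k).castSucc)).card = 2 by
          omega]

theorem card_filter_isBergeChain_le (j : ℕ) :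
    #{g : Fin (j + 2) → Clause n | IsBergeChain fun i => clVars (g i)}
      ≤ 8 * n.choose 3 * (3 * (8 * (n - 1).choose 2) * (2 * (8 * (n - 1).choose 2)) ^ j) := by
  induction j with
  | zero =>
    calc _ ≤ 3 * (8 * (n - 1).choose 2) * #{_h : Fin 1 → Clause n | True} :=
          card_filter_le_mul_of_snoc
            (fun g : Fin 2 → Clause n => IsBergeChain fun i => clVars (g i)) (fun _ => True)
            _ (fun _ _ => trivial) fun h _ => card_snoc_isBergeChain_le_three_mul h
      _ = _ := by
        rw [filter_true, card_univ, Fintype.card_fun, Fintype.card_fin, card_clause, pow_one,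
          pow_zero, mul_one, mul_comm]
  | succ j ih =>
    calc _ ≤ 2 * (8 * (n - 1).choose 2) *
            #{g : Fin (j + 2) → Clause n | IsBergeChain fun i => clVars (g i)} :=
          card_filter_le_mul_of_snoc
            (fun g : Fin (j + 3) → Clause n => IsBergeChain fun i => clVars (g i))
            (fun g : Fin (j + 2) → Clause n => IsBergeChain fun i => clVars (g i)) _
            (fun _ hg => hg.init) card_snoc_isBergeChain_le_two_mul
      _ ≤ 2 * (8 * (n - 1).choose 2) *
            (8 * n.choose 3 * (3 * (8 * (n - 1).choose 2) * (2 * (8 * (n - 1).choose 2)) ^ j)) :=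
          Nat.mul_le_mul_left _ ih
      _ = _ := by ring

end BergeChainCount

lemma card_filter_comp_mul_le {ι κ α : Type*} [Fintype ι] [Fintype κ] [Fintype α]
    [DecidableEq ι] [DecidableEq κ] {f : ι → κ} (hf : Function.Injective f)
    (P : (ι → α) → Prop) [DecidablePred P] :
    #{C : κ → α | P (C ∘ f)} * Fintype.card α ^ Fintype.card ι
      ≤ Fintype.card α ^ Fintype.card κ * #{g | P g} := by
  have hfiber : ∀ g ∈ ({g | P g} : Finset _),
      #{C ∈ ({C : κ → α | P (C ∘ f)} : Finset _) | C ∘ f = g}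
        ≤ Fintype.card α ^ (Fintype.card κ - Fintype.card ι) := by
    intro g _
    calc _ ≤ Fintype.card ({j // j ∉ Set.range f} → α) := by
          rw [← card_univ]
          refine card_le_card_of_injOn (fun C j => C j.1) (fun _ _ => mem_univ _)
            fun C hC C' hC' hCC' => funext fun j => ?_
          simp only [coe_filter, mem_filter, mem_univ, true_and, Set.mem_ofPred_eq] at hC hC'
          by_cases hj : j ∈ Set.range f
          · obtain ⟨i, rfl⟩ := hj
            exact congrFun (hC.2.trans hC'.2.symm) i
          · exact congrFun hCC' ⟨j, hj⟩
      _ = Fintype.card α ^ (Fintype.card κ - Fintype.card ι) := by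
          rw [Fintype.card_fun, Fintype.card_subtype_compl, Set.card_range_of_injective hf]
  have hle := card_le_mul_card_image_of_maps_to (f := fun C => C ∘ f)
    (fun C hC => mem_filter.mpr ⟨mem_univ _, (mem_filter.mp hC).2⟩) _ hfiber
  calc _ ≤ Fintype.card α ^ (Fintype.card κ - Fintype.card ι) * #{g | P g}
          * Fintype.card α ^ Fintype.card ι := Nat.mul_le_mul_right _ hle
    _ = _ := by
      rw [mul_right_comm, ← pow_add, Nat.sub_add_cancel (Fintype.card_le_of_injective f hf)]

lemma bergePathSetCount_le {n m : ℕ} (k : ℕ) (C : SatInstance n m) :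
    bergePathSetCount n m k C ≤ #{f : Fin k → Fin m | IsBergePathOrder C f} := by
  refine card_le_card_of_surjOn (fun f => univ.image f) fun s hs => ?_
  obtain ⟨hcard, f, hfs, hf⟩ := (mem_filter.mp hs).2
  refine ⟨f, mem_filter.mpr ⟨mem_univ _, hf⟩, eq_of_subset_of_card_le ?_ ?_⟩
  · exact fun i hi => by
      obtain ⟨j, -, rfl⟩ := mem_image.mp hi
      exact hfs j
  · rw [card_image_of_injective _ hf.1, card_univ, Fintype.card_fin, hcard]

lemma card_isBergePathOrder_mul_le {n m k : ℕ} (f : Fin k → Fin m) :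
    #{C : SatInstance n m | IsBergePathOrder C f} * (8 * n.choose 3) ^ k
      ≤ (8 * n.choose 3) ^ m *
          #{g : Fin k → Clause n | IsBergeChain fun i => clVars (g i)} := by
  by_cases hf : Function.Injective f
  · have := card_filter_comp_mul_le (α := Clause n) hf
      fun g : Fin k → Clause n => IsBergeChain fun i => clVars (g i)
    rw [card_clause, Fintype.card_fin, Fintype.card_fin] at this
    refine le_trans (Nat.mul_le_mul_right _ (card_le_card fun C hC => ?_)) this
    exact mem_filter.mpr ⟨mem_univ _, ((isBergePathOrder_iff C f).mp (mem_filter.mp hC).2).2⟩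
  · rw [filter_false_of_mem fun C _ hC => hf hC.1]
    simp

lemma mul_choose_pred_two (n : ℕ) : n * (n - 1).choose 2 = 3 * n.choose 3 := by
  rcases n with _ | n
  · simp
  · simpa [mul_comm] using Nat.add_one_mul_choose_eq n 2

lemma sum_bergePathSetCount_mul_le (n m j : ℕ) :
    (∑ C : SatInstance n m, bergePathSetCount n m (j + 2) C) * (8 * n.choose 3) ^ (j + 2)
      ≤ m ^ (j + 2) * (8 * n.choose 3) ^ m * (8 * n.choose 3 *
          (3 * (8 * (n - 1).choose 2) * (2 * (8 * (n - 1).choose 2)) ^ j)) :=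
  calc _ ≤ (∑ C : SatInstance n m, #{f : Fin (j + 2) → Fin m | IsBergePathOrder C f})
          * (8 * n.choose 3) ^ (j + 2) :=
        Nat.mul_le_mul_right _ (sum_le_sum fun C _ => bergePathSetCount_le _ C)
    _ = ∑ f : Fin (j + 2) → Fin m,
          #{C : SatInstance n m | IsBergePathOrder C f} * (8 * n.choose 3) ^ (j + 2) := by
        simp only [card_filter, sum_mul]
        exact sum_comm
    _ ≤ ∑ _f : Fin (j + 2) → Fin m, (8 * n.choose 3) ^ m * (8 * n.choose 3 *
          (3 * (8 * (n - 1).choose 2) * (2 * (8 * (n - 1).choose 2)) ^ j)) :=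
        sum_le_sum fun f _ => (card_isBergePathOrder_mul_le f).trans
          (Nat.mul_le_mul_left _ (card_filter_isBergeChain_le j))
    _ = _ := by simp [mul_assoc]

theorem stmt17_general (n m k : ℕ) (hn : 3 ≤ n) (hk : 2 ≤ k) :
    (∑ C : SatInstance n m, (bergePathSetCount n m k C : ℝ))
        / (Fintype.card (SatInstance n m) : ℝ)
      ≤ (m : ℝ) ^ k * (9 / (n : ℝ)) * (6 / (n : ℝ)) ^ (k - 2) := by
  obtain ⟨j, rfl⟩ := Nat.exists_eq_add_of_le' hk
  have hcount := sum_bergePathSetCount_mul_le n m j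
  set N := 8 * n.choose 3 with hN
  set V := 8 * (n - 1).choose 2 with hV
  have hN0 : (0 : ℝ) < N := Nat.cast_pos.mpr (Nat.mul_pos (by norm_num) (Nat.choose_pos hn))
  have hn0 : (0 : ℝ) < n := by exact_mod_cast (by omega : 0 < n)
  have hnV : (n : ℝ) * V = 3 * N := by
    exact_mod_cast (by rw [hN, hV, mul_left_comm, mul_choose_pred_two, mul_left_comm] :
      n * V = 3 * N)
  have h9 : (9 / n : ℝ) = 3 * V / N := by field_simp; linarith
  have h6 : (6 / n : ℝ) = 2 * V / N := by field_simp; linarith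
  rw [Fintype.card_fun, Fintype.card_fin, card_clause, ← hN, Nat.cast_pow, Nat.add_sub_cancel,
    h9, h6, div_pow, div_le_iff₀ (pow_pos hN0 m),
    ← mul_le_mul_iff_of_pos_right (pow_pos hN0 (j + 2))]
  calc _ ≤ ((m ^ (j + 2) * N ^ m * (N * (3 * V * (2 * V) ^ j)) : ℕ) : ℝ) := mod_cast hcount
    _ = _ := by push_cast; field_simp; ring

/-- For `n ≥ 3`, `m ≥ 1`, `k ≥ 2` and `C` drawn uniformly (i.i.d. uniform clauses), the
expected number of `k`-element sets of hyperedge indices of the variable hypergraph of `C`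
forming a Berge path of length `k` is at most `m^k · (9/n) · (6/n)^{k−2}`. -/
theorem stmt17 (n m k : ℕ) (hn : 3 ≤ n) (hm : 1 ≤ m) (hk : 2 ≤ k) :
    (∑ C : SatInstance n m, (bergePathSetCount n m k C : ℝ))
        / (Fintype.card (SatInstance n m) : ℝ)
      ≤ (m : ℝ) ^ k * (9 / (n : ℝ)) * (6 / (n : ℝ)) ^ (k - 2) :=
  stmt17_general n m k hn hk
end
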